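/- arXiv:1705.02992 — 7 statements merged into one kernel-verified Lean document; each statement's English description precedes it below -/
import Mathlib

section
/- Let $n \geq 1$ and work in the polynomial ring $\mathbb{Q}[x_1,\dots,x_n]$. For each $i \geq 1$, the elementary symmetric polynomial evaluated at the power series $1-e^{-x_1},\dots,1-e^{-x_n}$ satisfies $e_i(1-e^{-x_1},\ldots,1-e^{-x_n}) \equiv e_i(x_1,\ldots,x_n)$ modulo the ideal generated by the power sums $p_2,\dots,p_n$ together with the ideal $(x_1,\dots,x_n)^{n+1}$. -/
/-! Write `g = 1 - e^{-x}` (truncated), so `g ≡ x` modulo `x²` and hence `g^k ≡ x^k` modulo `x²`.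
Summing over the variables, `p_k(g(x)) - p_k(x)` is a combination of power sums `p_m` with
`m ≥ 2`, each of which lies in the ideal (`p_m` is a generator for `m ≤ n`, and has degree `> n`
otherwise). So all power sums of `g(x)` and `x` agree modulo the ideal, and over `ℚ` Newton's
identities determine the elementary symmetric polynomials from the power sums. -/

open MvPolynomial Finset

/-- The `i`-th elementary symmetric polynomial evaluated at a family of ring elements. -/
noncomputable def esymmAt {n : ℕ} (v : Fin n → MvPolynomial (Fin n) ℚ) (i : ℕ) :
    MvPolynomial (Fin n) ℚ :=
  ∑ s ∈ Finset.univ.powersetCard i, ∏ j ∈ s, v j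

/-- Truncation of `e^{-x_j}` modulo total degree `n+1`. -/
noncomputable def expNegTrunc (n : ℕ) (j : Fin n) : MvPolynomial (Fin n) ℚ :=
  ∑ k ∈ Finset.range (n + 1), (((k.factorial : ℚ))⁻¹) • (-(X j)) ^ k

theorem aeval_esymm_eq_of_aeval_psum_eq {σ R : Type*} [Fintype σ] [CommRing R] [Algebra ℚ R]
    {f g : σ → R} (h : ∀ k, aeval f (psum σ ℚ k) = aeval g (psum σ ℚ k)) (k : ℕ) :
    aeval f (esymm σ ℚ k) = aeval g (esymm σ ℚ k) := by
  induction k using Nat.strong_induction_on with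
  | _ k ih =>
  rcases k.eq_zero_or_pos with rfl | hk
  · simp [esymm_zero]
  have hunit : IsUnit (k : R) := by
    simpa using (IsUnit.mk0 (k : ℚ) (by positivity)).map (algebraMap ℚ R)
  refine hunit.mul_left_cancel ?_
  have newton (φ : σ → R) := congrArg (aeval φ) (mul_esymm_eq_sum σ ℚ k)
  simp only [map_mul, map_natCast, map_pow, map_neg, map_one, map_sum] at newton
  rw [newton f, newton g]
  refine congrArg _ (sum_congr rfl fun a ha => ?_)
  have ha1 : a.1 < k := (mem_filter.mp ha).2
  rw [ih a.1 ha1, h a.2]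

noncomputable def truncPsumIdeal (n : ℕ) : Ideal (MvPolynomial (Fin n) ℚ) :=
  Ideal.span ((fun k => psum (Fin n) ℚ k) '' Set.Icc 2 n) ⊔
    Ideal.span (Set.range (X : Fin n → MvPolynomial (Fin n) ℚ)) ^ (n + 1)

theorem psum_mem_truncPsumIdeal {n m : ℕ} (hm : 2 ≤ m) :
    psum (Fin n) ℚ m ∈ truncPsumIdeal n := by
  rcases le_or_gt m n with hmn | hnm
  · exact Ideal.mem_sup_left (Ideal.subset_span ⟨m, ⟨hm, hmn⟩, rfl⟩)
  refine Ideal.mem_sup_right (sum_mem fun j _ => Ideal.pow_le_pow_right hnm ?_)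
  exact Ideal.pow_mem_pow (Ideal.subset_span (Set.mem_range_self j)) m

theorem sum_aeval_X_mem_truncPsumIdeal {n : ℕ} {h : Polynomial ℚ}
    (hh : Polynomial.X ^ 2 ∣ h) :
    ∑ j, Polynomial.aeval (X j : MvPolynomial (Fin n) ℚ) h ∈ truncPsumIdeal n := by
  have hsum : ∑ j, Polynomial.aeval (X j : MvPolynomial (Fin n) ℚ) h =
      ∑ m ∈ range (h.natDegree + 1), h.coeff m • psum (Fin n) ℚ m := by
    simp only [Polynomial.aeval_eq_sum_range, psum, smul_sum]
    exact sum_comm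
  rw [hsum]
  refine sum_mem fun m _ => ?_
  rcases lt_or_ge m 2 with hm | hm
  · rw [Polynomial.X_pow_dvd_iff.mp hh m hm, zero_smul]
    exact zero_mem _
  · exact Submodule.smul_of_tower_mem _ _ (psum_mem_truncPsumIdeal hm)

noncomputable def oneSubExpNegTrunc (n : ℕ) : Polynomial ℚ :=
  1 - ∑ k ∈ range (n + 1), ((k.factorial : ℚ))⁻¹ • (-Polynomial.X) ^ k

theorem aeval_oneSubExpNegTrunc {n : ℕ} (j : Fin n) :
    Polynomial.aeval (X j) (oneSubExpNegTrunc n) = 1 - expNegTrunc n j := by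
  simp [oneSubExpNegTrunc, expNegTrunc]

theorem X_sq_dvd_oneSubExpNegTrunc_sub_X {n : ℕ} (hn : 1 ≤ n) :
    Polynomial.X ^ 2 ∣ oneSubExpNegTrunc n - Polynomial.X := by
  obtain ⟨m, rfl⟩ := Nat.exists_eq_add_of_le' hn
  have htail : oneSubExpNegTrunc (m + 1) - Polynomial.X =
      -∑ k ∈ range m, (((k + 2).factorial : ℚ))⁻¹ • (-Polynomial.X) ^ (k + 2) := by
    simp only [oneSubExpNegTrunc, sum_range_succ' _ (m + 1), sum_range_succ' _ m]
    simp
  rw [htail, dvd_neg]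
  refine dvd_sum fun k _ => dvd_smul_of_dvd _ ?_
  rw [add_comm, pow_add, neg_sq]
  exact dvd_mul_right _ _

theorem esymmAt_eq_aeval_esymm {n : ℕ} (v : Fin n → MvPolynomial (Fin n) ℚ) (i : ℕ) :
    esymmAt v i = aeval v (esymm (Fin n) ℚ i) := by
  simp [esymmAt, esymm, map_sum, map_prod]

theorem sum_one_sub_expNegTrunc_pow_sub_psum_mem {n : ℕ} (hn : 1 ≤ n) (k : ℕ) :
    ∑ j, (1 - expNegTrunc n j) ^ k - psum (Fin n) ℚ k ∈ truncPsumIdeal n := by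
  have hdvd : Polynomial.X ^ 2 ∣ oneSubExpNegTrunc n ^ k - Polynomial.X ^ k :=
    (X_sq_dvd_oneSubExpNegTrunc_sub_X hn).trans (sub_dvd_pow_sub_pow _ _ k)
  convert sum_aeval_X_mem_truncPsumIdeal hdvd using 1
  simp [aeval_oneSubExpNegTrunc, psum, sum_sub_distrib]

theorem esymm_one_sub_exp_congr_general (n : ℕ) (hn : 1 ≤ n) (i : ℕ) :
    esymmAt (fun j => 1 - expNegTrunc n j) i - esymmAt (fun j => X j) i ∈
      Ideal.span ((fun k => MvPolynomial.psum (Fin n) ℚ k) '' (Set.Icc 2 n)) ⊔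
        (Ideal.span (Set.range (X : Fin n → MvPolynomial (Fin n) ℚ))) ^ (n + 1) := by
  let π := Ideal.Quotient.mkₐ ℚ (truncPsumIdeal n)
  have aeval_π (v : Fin n → MvPolynomial (Fin n) ℚ) (p : MvPolynomial (Fin n) ℚ) :
      aeval (fun j => π (v j)) p = Ideal.Quotient.mk _ (aeval v p) :=
    (comp_aeval_apply (f := v) π p).symm
  have hpsum (k : ℕ) : aeval (fun j => π (1 - expNegTrunc n j)) (psum (Fin n) ℚ k) =
      aeval (fun j => π (X j)) (psum (Fin n) ℚ k) := by
    rw [aeval_π, aeval_π, Ideal.Quotient.eq]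
    simpa [psum] using sum_one_sub_expNegTrunc_pow_sub_psum_mem hn k
  have hesymm := aeval_esymm_eq_of_aeval_psum_eq hpsum i
  rw [aeval_π, aeval_π, Ideal.Quotient.eq] at hesymm
  rwa [esymmAt_eq_aeval_esymm, esymmAt_eq_aeval_esymm]

theorem esymm_one_sub_exp_congr (n : ℕ) (hn : 1 ≤ n) (i : ℕ) (hi : 1 ≤ i) :
    esymmAt (fun j => 1 - expNegTrunc n j) i - esymmAt (fun j => X j) i ∈
      Ideal.span ((fun k => MvPolynomial.psum (Fin n) ℚ k) '' (Set.Icc 2 n)) ⊔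
        (Ideal.span (Set.range (X : Fin n → MvPolynomial (Fin n) ℚ))) ^ (n + 1) :=
  esymm_one_sub_exp_congr_general n hn i
end

section
/- Let $p_k(x_1,\dots,x_n) = x_1^k + \cdots + x_n^k$. Then for each $i \geq 1$, in the quotient ring $\mathbb{Q}[x_1,\dots,x_n]/(x_1,\dots,x_n)^{n+1}$, one has $p_i(1-e^{-x_1},\ldots,1-e^{-x_n}) \equiv p_i(x_1,\dots,x_n)$ modulo the ideal generated by $p_2,\dots,p_n$. -/
open MvPolynomial Finset

/-- The `i`-th power sum evaluated at a family of ring elements. -/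
noncomputable def psumAt {n : ℕ} (v : Fin n → MvPolynomial (Fin n) ℚ) (i : ℕ) :
    MvPolynomial (Fin n) ℚ :=
  ∑ j, v j ^ i

/-- The univariate truncated exponential `e^{-T}`. -/
noncomputable def Epoly (n : ℕ) : Polynomial ℚ :=
  ∑ k ∈ Finset.range (n + 1), ((k.factorial : ℚ)⁻¹) • (-Polynomial.X) ^ k

lemma coeff_term (k m : ℕ) : ((((k.factorial : ℚ)⁻¹) • (-Polynomial.X) ^ k).coeff m)
    = if k = m then (-1 : ℚ) ^ m * (m.factorial : ℚ)⁻¹ else 0 := by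
  have h : ((-1 : Polynomial ℚ)) = Polynomial.C (-1) := by simp
  rw [Polynomial.coeff_smul, neg_pow, h, ← map_pow, Polynomial.coeff_C_mul,
    Polynomial.coeff_X_pow]
  by_cases hkm : k = m
  · subst hkm; simp [mul_comm]
  · rw [if_neg (Ne.symm hkm), if_neg hkm]; simp

lemma Epoly_coeff (n m : ℕ) (hm : m ≤ n) :
    (Epoly n).coeff m = (-1 : ℚ) ^ m * (m.factorial : ℚ)⁻¹ := by
  rw [Epoly, Polynomial.finset_sum_coeff, Finset.sum_eq_single m]
  · rw [coeff_term, if_pos rfl]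
  · intro k _ hk; rw [coeff_term, if_neg hk]
  · intro hm'; exact absurd (Finset.mem_range.2 (by omega)) hm'

lemma psum_mem (n : ℕ) (d : ℕ) (hd : 2 ≤ d) :
    MvPolynomial.psum (Fin n) ℚ d ∈
      Ideal.span ((fun k => MvPolynomial.psum (Fin n) ℚ k) '' (Set.Icc 2 n)) ⊔
        (Ideal.span (Set.range (X : Fin n → MvPolynomial (Fin n) ℚ))) ^ (n + 1) := by
  rcases le_or_gt d n with h | h
  · exact Ideal.mem_sup_left (Ideal.subset_span ⟨d, ⟨hd, h⟩, rfl⟩)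
  · refine Ideal.mem_sup_right ?_
    rw [MvPolynomial.psum]
    refine Ideal.sum_mem _ fun j _ => ?_
    have hx : (X j : MvPolynomial (Fin n) ℚ) ^ d = X j ^ (n + 1) * X j ^ (d - (n + 1)) := by
      rw [← pow_add]; congr 1; omega
    rw [hx]
    have hX : (X j : MvPolynomial (Fin n) ℚ) ∈
        Ideal.span (Set.range (X : Fin n → MvPolynomial (Fin n) ℚ)) :=
      Ideal.subset_span ⟨j, rfl⟩
    exact Ideal.mul_mem_right _ _ (Ideal.pow_mem_pow hX _)

theorem psum_one_sub_exp_congr (n : ℕ) (hn : 1 ≤ n) (i : ℕ) (hi : 1 ≤ i) :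
    psumAt (fun j => 1 - expNegTrunc n j) i - psumAt (fun j => X j) i ∈
      Ideal.span ((fun k => MvPolynomial.psum (Fin n) ℚ k) '' (Set.Icc 2 n)) ⊔
        (Ideal.span (Set.range (X : Fin n → MvPolynomial (Fin n) ℚ))) ^ (n + 1) := by
  classical
  set F : Polynomial ℚ := 1 - Epoly n with hFdef
  have hdvd : Polynomial.X ^ 2 ∣ F - Polynomial.X := by
    rw [Polynomial.X_pow_dvd_iff]
    intro d hd
    interval_cases d
    · rw [Polynomial.coeff_sub, hFdef, Polynomial.coeff_sub, Epoly_coeff n 0 (by omega)]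
      simp
    · rw [Polynomial.coeff_sub, hFdef, Polynomial.coeff_sub, Epoly_coeff n 1 (by omega)]
      simp [Polynomial.coeff_one]
  obtain ⟨R, hR⟩ := hdvd
  obtain ⟨S, hS⟩ := sub_dvd_pow_sub_pow (1 + Polynomial.X * R) 1 i
  set Q : Polynomial ℚ := Polynomial.X ^ (i + 1) * (R * S) with hQdef
  have key : F ^ i - Polynomial.X ^ i = Q := by
    have hF : F = Polynomial.X * (1 + Polynomial.X * R) := by linear_combination hR
    calc F ^ i - Polynomial.X ^ i
        = Polynomial.X ^ i * ((1 + Polynomial.X * R) ^ i - 1 ^ i) := by rw [hF, mul_pow]; ring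
      _ = Polynomial.X ^ i * (((1 + Polynomial.X * R) - 1) * S) := by rw [hS]
      _ = Q := by rw [hQdef]; ring
  have hj : ∀ j : Fin n, (1 - expNegTrunc n j) ^ i - X j ^ i = Polynomial.aeval (X j) Q := by
    intro j
    have hE : expNegTrunc n j = Polynomial.aeval (X j) (Epoly n) := by
      simp [expNegTrunc, Epoly, map_sum]
    rw [← key, map_sub, map_pow, map_pow, Polynomial.aeval_X, hFdef, map_sub, map_one, hE]
  have h1 : psumAt (fun j => 1 - expNegTrunc n j) i - psumAt (fun j => X j) i
      = ∑ j, Polynomial.aeval (X j) Q := by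
    rw [psumAt, psumAt, ← Finset.sum_sub_distrib]
    exact Finset.sum_congr rfl fun j _ => hj j
  have h2 : (∑ j, Polynomial.aeval (X j) Q : MvPolynomial (Fin n) ℚ)
      = ∑ d ∈ Finset.range (Q.natDegree + 1), Q.coeff d • MvPolynomial.psum (Fin n) ℚ d := by
    rw [Finset.sum_congr rfl fun j _ => Polynomial.aeval_eq_sum_range (X j), Finset.sum_comm]
    exact Finset.sum_congr rfl fun d _ => by rw [MvPolynomial.psum, Finset.smul_sum]
  rw [h1, h2]
  refine Ideal.sum_mem _ fun d _ => ?_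
  by_cases hc : Q.coeff d = 0
  · simp [hc]
  · have hd2 : 2 ≤ d := by
      by_contra hlt
      have hdi : d < i + 1 := by omega
      exact hc (Polynomial.X_pow_dvd_iff.mp ⟨R * S, hQdef⟩ d hdi)
    rw [MvPolynomial.smul_eq_C_mul]
    exact Ideal.mul_mem_left _ _ (psum_mem n d hd2)
end

section
/- Let $\lambda$ and $\mu$ be partitions of length at most $r+1$ (weakly decreasing sequences of nonnegative integers $\lambda_1 \geq \cdots \geq \lambda_{r+1}$ and $\mu_1 \geq \cdots \geq \mu_{r+1}$). Define the determinant $D = \det\left( \frac{1}{(\lambda_i - \mu_j + j - i)!} \right)_{1\leq i,j \leq r+1}$, where $1/m! := 0$ for $m < 0$. Then $D \neq 0$ if and only if $\lambda_i \geq \mu_i$ for all $i$. -/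
/-!
With `a i = λ i - i` and `b j = μ j - j` (both strictly decreasing) the matrix is
`(1 / (a i - b j)!)`. If `a k < b k`, pigeonhole gives every permutation `σ` an `i ≤ k ≤ σ i`,
and then `a (σ i) - b i < 0`, so every term of the Leibniz expansion vanishes.

Conversely, `1/(m-1)! = m/m!` and row-linearity of the determinant give
`∑ k, D(a - e k, b) = (∑ i, (a i - b i)) • D(a, b)`, the determinantal form of
`f^{λ/μ} = ∑ k, f^{(λ - e k)/μ}`. Induction on `∑ i, (a i - b i)` then shows `D(a, b) > 0`
whenever `b ≤ a`: every term on the left is either zero or positive by induction, and lowering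
the last row `k` with `b k < a k` gives a positive one.
-/

open Finset

/-- Reciprocal factorial: `1/m!` for `m ≥ 0`, and `0` for `m < 0`. -/
noncomputable def rfac (m : ℤ) : ℚ :=
  if m < 0 then 0 else ((m.toNat).factorial : ℚ)⁻¹

lemma rfac_of_neg {m : ℤ} (h : m < 0) : rfac m = 0 := if_pos h

lemma rfac_zero : rfac 0 = 1 := by simp [rfac]

lemma rfac_sub_one (m : ℤ) : rfac (m - 1) = m * rfac m := by
  obtain h | rfl | h := lt_trichotomy m 0
  · rw [rfac_of_neg h, rfac_of_neg (by omega), mul_zero]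
  · rw [rfac_of_neg (by omega), Int.cast_zero, zero_mul]
  · obtain ⟨t, rfl⟩ : ∃ t : ℕ, m = t + 1 := ⟨(m - 1).toNat, by omega⟩
    rw [rfac, rfac, if_neg (by omega), if_neg (by omega), add_sub_cancel_right, Int.toNat_natCast,
      show ((t : ℤ) + 1).toNat = t + 1 by omega, Nat.factorial_succ]
    push_cast
    field_simp

theorem Matrix.sum_det_updateRow_mul {n R : Type*} [Fintype n] [DecidableEq n] [CommRing R]
    (M : Matrix n n R) (c : n → R) :
    ∑ k, (M.updateRow k fun j => c j * M k j).det = (∑ j, c j) * M.det := by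
  have hdiag : ∀ j, ∑ k, M.adjugate j k * M k j = M.det := fun j => by
    simpa [Matrix.mul_apply] using congrFun (congrFun M.adjugate_mul j) j
  simp_rw [← Matrix.cramer_transpose_apply, Matrix.cramer_eq_adjugate_mulVec,
    ← Matrix.adjugate_transpose, Matrix.mulVec, dotProduct, Matrix.transpose_apply]
  rw [sum_comm, sum_mul]
  refine sum_congr rfl fun j _ => ?_
  rw [← hdiag, mul_sum]
  exact sum_congr rfl fun k _ => by ring

theorem Equiv.Perm.exists_le_le_apply {α : Type*} [Fintype α] [LinearOrder α]
    (σ : Equiv.Perm α) (k : α) : ∃ i ≤ k, k ≤ σ i := by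
  by_contra! h
  have hcard : #{i | i ≤ k} ≤ #{i | i < k} :=
    card_le_card_of_injOn σ (fun i hi => by simp_all) σ.injective.injOn
  refine hcard.not_gt (card_lt_card ?_)
  refine ssubset_iff_of_subset (fun i hi => ?_) |>.2 ⟨k, by simp⟩
  simp only [mem_filter, mem_univ, true_and] at hi ⊢
  exact hi.le

section SubSingle

variable {n : Type*} [PartialOrder n] [DecidableEq n] {a : n → ℤ}

lemma StrictAnti.antitone_sub_single (ha : StrictAnti a) (k : n) :
    Antitone (a - Pi.single k 1) := by
  intro i j hij
  obtain hij | rfl := hij.lt_or_eq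
  · have := ha hij
    simp only [Pi.sub_apply, Pi.single_apply]
    split_ifs <;> omega
  · rfl

lemma StrictAnti.strictAnti_sub_single (ha : StrictAnti a) {k : n}
    (hk : ∀ i, k < i → a i < a k - 1) : StrictAnti (a - Pi.single k 1) := by
  intro i j hij
  have := ha hij
  rcases eq_or_ne i k with rfl | hi
  · simpa [hij.ne'] using hk j hij
  · rcases eq_or_ne j k with rfl | hj
    · simp only [Pi.sub_apply, Pi.single_eq_same, Pi.single_eq_of_ne hi]
      omega
    · simpa [hi, hj] using this

end SubSingle

section Aitken

variable {n : Type*}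

noncomputable def aitkenMatrix (a b : n → ℤ) : Matrix n n ℚ :=
  Matrix.of fun i j => rfac (a i - b j)

@[simp]
lemma aitkenMatrix_apply (a b : n → ℤ) (i j : n) : aitkenMatrix a b i j = rfac (a i - b j) := rfl

lemma aitkenMatrix_sub_single [DecidableEq n] (a b : n → ℤ) (k : n) :
    aitkenMatrix (a - Pi.single k 1) b = (aitkenMatrix a b).updateRow k
      ((a k : ℚ) • aitkenMatrix a b k - fun j => (b j : ℚ) * aitkenMatrix a b k j) := by
  ext i j
  rcases eq_or_ne i k with rfl | hik
  · simp [sub_right_comm _ (1 : ℤ), rfac_sub_one]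
    ring
  · simp [hik]

variable [Fintype n] [DecidableEq n]

lemma sum_det_aitkenMatrix_sub_single (a b : n → ℤ) :
    ∑ k, (aitkenMatrix (a - Pi.single k 1) b).det =
      (∑ i, (a i - b i) : ℤ) * (aitkenMatrix a b).det := by
  set M := aitkenMatrix a b
  have hrow : ∀ k, (aitkenMatrix (a - Pi.single k 1) b).det =
      a k * M.det - (M.updateRow k fun j => (b j : ℚ) * M k j).det := fun k => by
    rw [aitkenMatrix_sub_single, sub_eq_add_neg, ← neg_one_smul ℚ (fun j => (b j : ℚ) * M k j),
      Matrix.det_updateRow_add, Matrix.det_updateRow_smul, Matrix.det_updateRow_smul,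
      Matrix.updateRow_eq_self]
    ring
  simp_rw [hrow, sum_sub_distrib, ← sum_mul, Matrix.sum_det_updateRow_mul]
  push_cast
  rw [sub_mul]

section LinearOrder

variable [LinearOrder n]

lemma det_aitkenMatrix_eq_zero_of_lt {a b : n → ℤ} (ha : Antitone a) (hb : Antitone b) {k : n}
    (hk : a k < b k) : (aitkenMatrix a b).det = 0 := by
  refine (Matrix.det_apply _).trans (sum_eq_zero fun σ _ => ?_)
  obtain ⟨i, hik, hki⟩ := σ.exists_le_le_apply k
  have : a (σ i) - b i < 0 := by linarith [ha hki, hb hik]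
  rw [prod_eq_zero (mem_univ i) (by simpa using rfac_of_neg this), smul_zero]

lemma det_aitkenMatrix_self {b : n → ℤ} (hb : StrictAnti b) : (aitkenMatrix b b).det = 1 := by
  have htri : (aitkenMatrix b b).IsUpperTriangular := fun i j hji => by
    simpa using rfac_of_neg (sub_neg.2 (hb hji))
  simp [Matrix.det_of_isUpperTriangular htri, rfac_zero]

lemma det_aitkenMatrix_nonneg_of_pos {a b : n → ℤ} (ha : Antitone a) (hb : StrictAnti b)
    (hpos : StrictAnti a → b ≤ a → 0 < (aitkenMatrix a b).det) :
    0 ≤ (aitkenMatrix a b).det := by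
  by_cases hinj : Function.Injective a
  · by_cases hba : b ≤ a
    · exact (hpos (ha.strictAnti_of_injective hinj) hba).le
    · obtain ⟨k, hk⟩ : ∃ k, a k < b k := by simpa [Pi.le_def] using hba
      exact (det_aitkenMatrix_eq_zero_of_lt ha hb.antitone hk).ge
  · obtain ⟨i, j, hij, hne⟩ := Function.not_injective_iff.1 hinj
    exact (Matrix.det_zero_of_row_eq hne (funext fun l => by simp [hij])).ge

lemma det_aitkenMatrix_pos {a b : n → ℤ} (ha : StrictAnti a) (hb : StrictAnti b) (hba : b ≤ a) :
    0 < (aitkenMatrix a b).det := by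
  obtain ⟨N, hN⟩ : ∃ N : ℕ, ∑ i, (a i - b i) = N :=
    ⟨_, (Int.toNat_of_nonneg (sum_nonneg fun i _ => sub_nonneg.2 (hba i))).symm⟩
  induction N generalizing a with
  | zero =>
    have hab : a = b := funext fun i => by
      have := (sum_eq_zero_iff_of_nonneg fun i _ => sub_nonneg.2 (hba i)).1 hN i (mem_univ i)
      omega
    subst hab
    rw [det_aitkenMatrix_self ha]
    exact one_pos
  | succ N ih =>
    have hsum : ∀ k, ∑ i, ((a - Pi.single k 1 : n → ℤ) i - b i) = N := fun k => by
      simp only [Pi.sub_apply, sum_sub_distrib, sum_pi_single', if_pos (mem_univ k)] at hN ⊢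
      push_cast at hN
      linarith
    have hlowered : ∀ k, 0 ≤ (aitkenMatrix (a - Pi.single k 1) b).det := fun k =>
      det_aitkenMatrix_nonneg_of_pos (ha.antitone_sub_single k) hb fun ha' hba' =>
        ih ha' hba' (hsum k)
    obtain ⟨i, hi⟩ : ∃ i, b i < a i := by
      by_contra! h
      have : ∑ i, (a i - b i) = 0 := sum_eq_zero fun i _ => by linarith [h i, hba i]
      omega
    obtain ⟨k, hk, hkmax⟩ := exists_max_image {i | b i < a i} id ⟨i, by simpa using hi⟩
    simp only [mem_filter, mem_univ, true_and, id] at hk hkmax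
    -- `k` is the last row with `b k < a k`, so lowering it keeps `a` strictly decreasing and `≥ b`.
    have hlast : ∀ i, k < i → a i < a k - 1 := fun i hki => by
      have := hb hki
      have : b i ≤ a i := hba i
      have : ¬b i < a i := fun h => (hkmax i h).not_gt hki
      omega
    have hpos : 0 < (aitkenMatrix (a - Pi.single k 1) b).det := by
      refine ih (ha.strictAnti_sub_single hlast) (fun i => ?_) (hsum k)
      have : b i ≤ a i := hba i
      simp only [Pi.sub_apply, Pi.single_apply]
      split_ifs with hik <;> subst_vars <;> omega
    have := sum_pos' (fun k _ => hlowered k) ⟨k, mem_univ k, hpos⟩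
    rw [sum_det_aitkenMatrix_sub_single, hN] at this
    exact pos_of_mul_pos_right this (by positivity)

end LinearOrder

end Aitken

lemma strictAnti_sub_val {m : ℕ} {f : Fin m → ℕ} (hf : Antitone f) :
    StrictAnti fun i => (f i : ℤ) - i := fun i j hij => by
  show (f j : ℤ) - j < f i - i
  have := hf hij.le
  have : (i : ℤ) < j := by exact_mod_cast hij
  omega

theorem aitken_det_ne_zero_iff (r : ℕ) (lam mu : Fin (r + 1) → ℕ)
    (hlam : Antitone lam) (hmu : Antitone mu) :
    Matrix.det (fun i j : Fin (r + 1) =>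
        rfac ((lam i : ℤ) - (mu j : ℤ) + (j.val : ℤ) - (i.val : ℤ))) ≠ 0 ↔
      ∀ i, mu i ≤ lam i := by
  set a : Fin (r + 1) → ℤ := fun i => lam i - i
  set b : Fin (r + 1) → ℤ := fun j => mu j - j
  have ha : StrictAnti a := strictAnti_sub_val hlam
  have hb : StrictAnti b := strictAnti_sub_val hmu
  have hM : (fun i j : Fin (r + 1) => rfac ((lam i : ℤ) - (mu j : ℤ) + (j.val : ℤ) - (i.val : ℤ)))
      = aitkenMatrix a b := by
    ext i j
    simp only [aitkenMatrix_apply, a, b]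
    congr 1
    ring
  rw [hM]
  constructor
  · intro hdet i
    by_contra! hi
    have hlt : a i < b i := by simp only [a, b]; omega
    exact hdet (det_aitkenMatrix_eq_zero_of_lt ha.antitone hb.antitone hlt)
  · intro h
    exact (det_aitkenMatrix_pos ha hb fun i => by simp [a, b, h i]).ne'
end

section
/- For any partition $\lambda$ of length $t$ and any partition $\mu$ with $\lambda/\mu$ a skew diagram, the following identity holds among numbers of standard Young tableaux of skew shapes: $(t)(|\lambda/\mu| + 1) f^{\lambda/\mu} = \sum_{i=1}^{t} (\lambda_i + t + 1 - i) f^{(\lambda + \epsilon_i)/\mu} - \sum_{i=1}^{t} (\mu_i + t - i) f^{\lambda/(\mu - \epsilon_i)}$, where $f^{\nu/\kappa} := |\nu/\kappa|! \det(1/(\nu_i - \kappa_j + j - i)!)$ with $1/m! = 0$ for $m < 0$, and any term with an invalid shape is interpreted via this determinantal formula (and hence vanishes when the shape is not a skew diagram). -/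
open Finset

/-- The Aitken determinantal expression `f^{ν/κ} = |ν/κ|! · det(1/(ν_i-κ_j+j-i)!)`,
interpreted for arbitrary integer sequences (it vanishes when the shape is not a
skew diagram). -/
noncomputable def aitkenF {t : ℕ} (nu ka : Fin t → ℤ) : ℚ :=
  ((∑ i, (nu i - ka i)).toNat.factorial : ℚ) *
    Matrix.det (fun i j : Fin t => rfac (nu i - ka j + (j.val : ℤ) - (i.val : ℤ)))

lemma rfac_succ (m : ℤ) : ((m + 1 : ℤ) : ℚ) * rfac (m + 1) = rfac m := by
  rcases lt_trichotomy m (-1) with h | h | h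
  · rw [rfac, if_pos (by omega), rfac, if_pos (by omega), mul_zero]
  · subst h; norm_num [rfac]
  · have hm : 0 ≤ m := by omega
    rw [rfac, if_neg (by omega), rfac, if_neg (by omega)]
    have ht : (m + 1).toNat = m.toNat + 1 := by omega
    rw [ht, Nat.factorial_succ]
    have h1 : ((m + 1 : ℤ) : ℚ) = ((m.toNat + 1 : ℕ) : ℚ) := by
      exact_mod_cast congrArg (fun x : ℤ => ((x + 1 : ℤ) : ℚ)) (Int.toNat_of_nonneg hm).symm
    rw [h1]
    push_cast
    rw [mul_inv]
    have : ((m.toNat : ℚ) + 1) ≠ 0 := by positivity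
    field_simp

lemma det_updateRow_eq_sum (t : ℕ) (A : Matrix (Fin t) (Fin t) ℚ) (i : Fin t)
    (v : Fin t → ℚ) :
    (A.updateRow i v).det = ∑ j, v j * A.adjugate j i := by
  have hv : v = ∑ j : Fin t, v j • (Pi.single j 1 : Fin t → ℚ) := by
    ext k
    simp [Pi.single_apply]
  have h1 : (A.updateRow i v).det
      = ∑ j : Fin t, (A.updateRow i (v j • (Pi.single j 1 : Fin t → ℚ))).det := by
    conv_lhs => rw [hv]
    exact (Matrix.detRowAlternating : (Fin t → ℚ) [⋀^Fin t]→ₗ[ℚ] ℚ).map_update_sum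
      Finset.univ i _ A
  rw [h1]
  refine Finset.sum_congr rfl fun j _ => ?_
  rw [Matrix.det_updateRow_smul, Matrix.adjugate_apply]

lemma sum_det_updateRow_eq (t : ℕ) (A P : Matrix (Fin t) (Fin t) ℚ) :
    ∑ i, (A.updateRow i (P i)).det = ∑ j, (A.updateCol j (fun i => P i j)).det := by
  have hcol : ∀ j : Fin t, (A.updateCol j (fun i => P i j)).det
      = ∑ i, P i j * A.adjugate j i := by
    intro j
    rw [← Matrix.det_transpose, ← Matrix.updateRow_transpose,
      det_updateRow_eq_sum]
    refine Finset.sum_congr rfl fun i _ => ?_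
    rw [← Matrix.adjugate_transpose, Matrix.transpose_apply]
  simp only [det_updateRow_eq_sum, hcol]
  exact Finset.sum_comm

theorem syt_recursion (t : ℕ) (ht : 1 ≤ t) (lam mu : Fin t → ℕ)
    (hlam : Antitone lam) (hmu : Antitone mu) (hsub : ∀ i, mu i ≤ lam i) :
    (t : ℚ) * ((∑ i, ((lam i : ℚ) - (mu i : ℚ))) + 1) *
        aitkenF (fun i => (lam i : ℤ)) (fun i => (mu i : ℤ)) =
      ∑ i : Fin t, ((lam i : ℚ) + t - (i.val : ℚ)) *
          aitkenF (fun i' => (lam i' : ℤ) + (if i' = i then 1 else 0))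
            (fun i' => (mu i' : ℤ)) -
        ∑ i : Fin t, ((mu i : ℚ) + t - 1 - (i.val : ℚ)) *
          aitkenF (fun i' => (lam i' : ℤ))
            (fun i' => (mu i' : ℤ) - (if i' = i then 1 else 0)) := by
  classical
  set n : ℕ := ∑ i, (lam i - mu i) with hn
  -- integer sum computations
  have hsumZ : (∑ i, ((lam i : ℤ) - (mu i : ℤ))) = (n : ℤ) := by
    rw [hn, Nat.cast_sum]
    refine Finset.sum_congr rfl fun i _ => ?_
    have := hsub i
    omega
  have hsumQ : (∑ i, ((lam i : ℚ) - (mu i : ℚ))) = (n : ℚ) := by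
    rw [hn, Nat.cast_sum]
    refine Finset.sum_congr rfl fun i _ => ?_
    have := hsub i
    push_cast [Nat.cast_sub this]
    ring
  -- matrices
  set M : Matrix (Fin t) (Fin t) ℚ :=
    Matrix.of (fun i j : Fin t => rfac ((lam i : ℤ) - (mu j : ℤ) + (j.val : ℤ) - (i.val : ℤ)))
    with hM
  set V : Matrix (Fin t) (Fin t) ℚ :=
    Matrix.of (fun i j : Fin t =>
      rfac ((lam i : ℤ) - (mu j : ℤ) + (j.val : ℤ) - (i.val : ℤ) + 1)) with hV
  set c : Fin t → ℚ := fun i => (lam i : ℚ) + t - (i.val : ℚ) with hc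
  set d : Fin t → ℚ := fun j => (mu j : ℚ) + t - 1 - (j.val : ℚ) with hd
  -- base aitkenF
  have hbase : aitkenF (fun i => (lam i : ℤ)) (fun i => (mu i : ℤ))
      = (n.factorial : ℚ) * M.det := by
    rw [aitkenF, hsumZ, Int.toNat_natCast]
    rfl
  -- row-added aitkenF
  have hrow : ∀ k : Fin t,
      aitkenF (fun i' => (lam i' : ℤ) + (if i' = k then 1 else 0))
        (fun i' => (mu i' : ℤ))
      = ((n + 1).factorial : ℚ) * (M.updateRow k (V k)).det := by
    intro k
    have hs : (∑ i, ((lam i : ℤ) + (if i = k then 1 else 0) - (mu i : ℤ)))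
        = (n : ℤ) + 1 := by
      have : (∑ i, ((lam i : ℤ) + (if i = k then 1 else 0) - (mu i : ℤ)))
          = (∑ i, ((lam i : ℤ) - (mu i : ℤ)))
            + ∑ i, (if i = k then (1 : ℤ) else 0) := by
        rw [← Finset.sum_add_distrib]
        exact Finset.sum_congr rfl fun i _ => by ring
      rw [this, hsumZ, Finset.sum_ite_eq' Finset.univ k (fun _ => (1 : ℤ)),
        if_pos (Finset.mem_univ k)]
    have hdet : (fun i j : Fin t =>
        rfac ((lam i : ℤ) + (if i = k then 1 else 0) - (mu j : ℤ)
          + (j.val : ℤ) - (i.val : ℤ)))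
        = M.updateRow k (V k) := by
      funext i j
      rcases eq_or_ne i k with h | h
      · subst h
        rw [Matrix.updateRow_self, if_pos rfl]
        show _ = rfac _
        congr 1 <;> ring
      · rw [Matrix.updateRow_ne h, if_neg h]
        show _ = rfac _
        congr 1 <;> ring
    rw [aitkenF, hs]
    have : ((n : ℤ) + 1).toNat = n + 1 := by omega
    rw [this, hdet]
  -- column-removed aitkenF
  have hcol : ∀ k : Fin t,
      aitkenF (fun i' => (lam i' : ℤ))
        (fun i' => (mu i' : ℤ) - (if i' = k then 1 else 0))
      = ((n + 1).factorial : ℚ) * (M.updateCol k (fun i => V i k)).det := by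
    intro k
    have hs : (∑ i, ((lam i : ℤ) - ((mu i : ℤ) - (if i = k then 1 else 0))))
        = (n : ℤ) + 1 := by
      have : (∑ i, ((lam i : ℤ) - ((mu i : ℤ) - (if i = k then 1 else 0))))
          = (∑ i, ((lam i : ℤ) - (mu i : ℤ)))
            + ∑ i, (if i = k then (1 : ℤ) else 0) := by
        rw [← Finset.sum_add_distrib]
        exact Finset.sum_congr rfl fun i _ => by ring
      rw [this, hsumZ, Finset.sum_ite_eq' Finset.univ k (fun _ => (1 : ℤ)),
        if_pos (Finset.mem_univ k)]
    have hdet : (fun i j : Fin t =>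
        rfac ((lam i : ℤ) - ((mu j : ℤ) - (if j = k then 1 else 0))
          + (j.val : ℤ) - (i.val : ℤ)))
        = M.updateCol k (fun i => V i k) := by
      funext i j
      rcases eq_or_ne j k with h | h
      · subst h
        rw [Matrix.updateCol_self, if_pos rfl]
        show _ = rfac _
        congr 1 <;> ring
      · rw [Matrix.updateCol_ne h, if_neg h]
        show _ = rfac _
        congr 1 <;> ring
    rw [aitkenF, hs]
    have : ((n : ℤ) + 1).toNat = n + 1 := by omega
    rw [this, hdet]
  -- pointwise row identity : c i • V i = M i + (fun j => d j * V i j)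
  have hkey : ∀ i : Fin t, c i • (V i) = M i + fun j => d j * V i j := by
    intro i
    funext j
    have ha := rfac_succ ((lam i : ℤ) - (mu j : ℤ) + (j.val : ℤ) - (i.val : ℤ))
    have hcd : c i = (((lam i : ℤ) - (mu j : ℤ) + (j.val : ℤ) - (i.val : ℤ) + 1 : ℤ) : ℚ)
        + d j := by
      rw [hc, hd]
      push_cast
      ring
    show c i * V i j = M i j + d j * V i j
    have ha' : (((lam i : ℤ) - (mu j : ℤ) + (j.val : ℤ) - (i.val : ℤ) + 1 : ℤ) : ℚ)
        * V i j = M i j := ha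
    rw [hcd, add_mul, ha']
  -- per-row determinant identity
  have hrowdet : ∀ i : Fin t,
      c i * (M.updateRow i (V i)).det
        = M.det + (M.updateRow i (fun j => d j * V i j)).det := by
    intro i
    rw [← Matrix.det_updateRow_smul, hkey i, Matrix.det_updateRow_add,
      Matrix.updateRow_eq_self]
  -- per-column determinant identity
  have hcoldet : ∀ j : Fin t,
      d j * (M.updateCol j (fun i => V i j)).det
        = (M.updateCol j (fun i => d j * V i j)).det := by
    intro j
    rw [← Matrix.det_updateCol_smul]
    rfl
  -- core identity
  have hcore : ∑ i, c i * (M.updateRow i (V i)).det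
      - ∑ j, d j * (M.updateCol j (fun i => V i j)).det
      = (t : ℚ) * M.det := by
    have h1 : ∑ i, c i * (M.updateRow i (V i)).det
        = (t : ℚ) * M.det
          + ∑ i, (M.updateRow i (fun j => d j * V i j)).det := by
      rw [Finset.sum_congr rfl fun i _ => hrowdet i, Finset.sum_add_distrib,
        Finset.sum_const, Finset.card_univ, Fintype.card_fin, nsmul_eq_mul]
    have h2 : ∑ j, d j * (M.updateCol j (fun i => V i j)).det
        = ∑ j, (M.updateCol j (fun i => d j * V i j)).det :=
      Finset.sum_congr rfl fun j _ => hcoldet j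
    rw [h1, h2]
    have h3 : (∑ i, (M.updateRow i fun j => d j * V i j).det)
        = ∑ j, (M.updateCol j fun i => d j * V i j).det :=
      sum_det_updateRow_eq t M (Matrix.of fun i j => d j * V i j)
    rw [h3]
    ring
  -- assemble
  calc (t : ℚ) * ((∑ i, ((lam i : ℚ) - (mu i : ℚ))) + 1)
        * aitkenF (fun i => (lam i : ℤ)) (fun i => (mu i : ℤ))
      = ((n + 1).factorial : ℚ) * ((t : ℚ) * M.det) := by
        rw [hbase, hsumQ, Nat.factorial_succ]
        push_cast
        ring
    _ = ((n + 1).factorial : ℚ)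
          * (∑ i, c i * (M.updateRow i (V i)).det
            - ∑ j, d j * (M.updateCol j (fun i => V i j)).det) := by rw [hcore]
    _ = _ := by
        rw [mul_sub, Finset.mul_sum, Finset.mul_sum]
        congr 1
        · exact Finset.sum_congr rfl fun i _ => by rw [hrow i, hc]; ring
        · exact Finset.sum_congr rfl fun j _ => by rw [hcol j, hd]; ring
end

section
/- Vandermonde-type evaluation: for a sequence of integers $l_1, \dots, l_{r+1}$ with $l_i + r + 1 - i \geq 0$ for all $i$, and $g = \sum_{i=1}^{r+1} l_i$, one has $g! \cdot \det\left( \frac{1}{(l_i + j - i)!} \right)_{1 \leq i,j \leq r+1} = g! \cdot \frac{\prod_{1 \leq i < j \leq r+1}(l_i - l_j + j - i)}{\prod_{i=1}^{r+1} (l_i + r + 1 - i)!}$, where $1/m! := 0$ for $m < 0$. -/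
open Finset

lemma fac_mul_rfac (m k : ℕ) :
    (m.factorial : ℚ) * rfac ((m : ℤ) - k) = (m.descFactorial k : ℚ) := by
  rcases lt_or_ge m k with h | h
  · rw [rfac, if_pos (by omega), Nat.descFactorial_eq_zero_iff_lt.mpr h]
    simp
  · rw [rfac, if_neg (by omega)]
    have ht : ((m : ℤ) - k).toNat = m - k := by omega
    rw [ht, ← Nat.factorial_mul_descFactorial h]
    have : ((m - k).factorial : ℚ) ≠ 0 := Nat.cast_ne_zero.mpr (Nat.factorial_ne_zero _)
    push_cast
    field_simp

theorem vandermonde_factorial_det (r : ℕ) (l : Fin (r + 1) → ℤ)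
    (hl : ∀ i : Fin (r + 1), 0 ≤ l i + (r : ℤ) - (i.val : ℤ)) :
    ((∑ i, l i).toNat.factorial : ℚ) *
        Matrix.det (fun i j : Fin (r + 1) =>
          rfac (l i + (j.val : ℤ) - (i.val : ℤ))) =
      ((∑ i, l i).toNat.factorial : ℚ) *
        (∏ i : Fin (r + 1), ∏ j ∈ Finset.univ.filter (fun j : Fin (r + 1) => i < j),
            ((l i : ℚ) - (l j : ℚ) + (j.val : ℚ) - (i.val : ℚ))) /
          ∏ i : Fin (r + 1), (((l i + (r : ℤ) - (i.val : ℤ)).toNat).factorial : ℚ) := by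
  set m : Fin (r + 1) → ℕ := fun i => (l i + (r : ℤ) - (i.val : ℤ)).toNat with hm
  have hmz : ∀ i, (m i : ℤ) = l i + (r : ℤ) - (i.val : ℤ) := fun i =>
    Int.toNat_of_nonneg (hl i)
  set D : ℚ := ∏ i : Fin (r + 1), ((m i).factorial : ℚ) with hD
  have hDne : D ≠ 0 :=
    Finset.prod_ne_zero_iff.mpr fun i _ => Nat.cast_ne_zero.mpr (Nat.factorial_ne_zero _)
  set V : ℚ := ∏ i : Fin (r + 1), ∏ j ∈ Finset.univ.filter (fun j : Fin (r + 1) => i < j),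
      ((l i : ℚ) - (l j : ℚ) + (j.val : ℚ) - (i.val : ℚ)) with hV
  have key : D * Matrix.det (fun i j : Fin (r + 1) =>
      rfac (l i + (j.val : ℤ) - (i.val : ℤ))) = V := by
    rw [hD, ← Matrix.det_mul_column (fun i => ((m i).factorial : ℚ))
      ((fun i j : Fin (r + 1) => rfac (l i + (j.val : ℤ) - (i.val : ℤ))) : Matrix _ _ ℚ)]
    have hE : (Matrix.of fun i j : Fin (r + 1) =>
        ((m i).factorial : ℚ) * rfac (l i + (j.val : ℤ) - (i.val : ℤ))) =
        Matrix.of (fun i j : Fin (r + 1) =>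
          (descPochhammer ℚ (r - j.val)).eval ((m i : ℚ))) := by
      ext i j
      have harg : l i + (j.val : ℤ) - (i.val : ℤ) = (m i : ℤ) - ((r - j.val : ℕ) : ℤ) := by
        have := hmz i
        have hj : j.val ≤ r := Nat.lt_succ_iff.mp j.isLt
        omega
      simp only [Matrix.of_apply, harg, fac_mul_rfac,
        descPochhammer_eval_eq_descFactorial]
    rw [hE]
    -- reindex by reversal on both rows and columns
    rw [← Matrix.det_submatrix_equiv_self (Fin.revPerm) (Matrix.of fun i j : Fin (r + 1) =>
      (descPochhammer ℚ (r - j.val)).eval ((m i : ℚ)))]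
    have hE2 : ((Matrix.of fun i j : Fin (r + 1) =>
        (descPochhammer ℚ (r - j.val)).eval ((m i : ℚ))).submatrix Fin.revPerm Fin.revPerm) =
        Matrix.of (fun i j : Fin (r + 1) =>
          (descPochhammer ℚ j.val).eval ((fun i => ((m (Fin.rev i) : ℚ))) i)) := by
      ext i j
      simp [Matrix.submatrix, Nat.sub_sub_self (Nat.lt_succ_iff.mp j.isLt)]
    rw [hE2, ← Matrix.det_eval_matrixOfPolynomials_eq_det_vandermonde
      (fun i => ((m (Fin.rev i) : ℚ))) (fun j => descPochhammer ℚ j.val)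
      (fun j => descPochhammer_natDegree ℚ j.val) (fun j => monic_descPochhammer ℚ j.val),
      Matrix.det_vandermonde]
    -- now reindex the double product
    rw [hV]
    have hfilter : ∀ i : Fin (r + 1),
        Finset.univ.filter (fun j : Fin (r + 1) => i < j) = Finset.Ioi i := by
      intro i; ext j; simp
    simp only [hfilter]
    rw [Finset.prod_sigma' Finset.univ (fun i => Finset.Ioi i)
        (fun i j => ((m (Fin.rev j) : ℚ) - (m (Fin.rev i) : ℚ))),
      Finset.prod_sigma' Finset.univ (fun i => Finset.Ioi i)
        (fun i j => ((l i : ℚ) - (l j : ℚ) + (j.val : ℚ) - (i.val : ℚ)))]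
    refine Finset.prod_nbij' (fun p => ⟨Fin.rev p.2, Fin.rev p.1⟩)
      (fun p => ⟨Fin.rev p.2, Fin.rev p.1⟩) ?_ ?_ ?_ ?_ ?_
    · rintro ⟨a, b⟩ hab
      simp only [Finset.mem_sigma, Finset.mem_univ, Finset.mem_Ioi, true_and] at hab ⊢
      exact Fin.rev_lt_rev.mpr hab
    · rintro ⟨a, b⟩ hab
      simp only [Finset.mem_sigma, Finset.mem_univ, Finset.mem_Ioi, true_and] at hab ⊢
      exact Fin.rev_lt_rev.mpr hab
    · rintro ⟨a, b⟩ _; simp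
    · rintro ⟨a, b⟩ _; simp
    · rintro ⟨a, b⟩ hab
      have h1 := hmz b.rev
      have h2 := hmz a.rev
      have hz : (m b.rev : ℤ) - (m a.rev : ℤ) =
          l b.rev - l a.rev + (a.rev.val : ℤ) - (b.rev.val : ℤ) := by omega
      have hq := congrArg (fun z : ℤ => (z : ℚ)) hz
      push_cast at hq
      simp only []
      linarith [hq]
  have hdet : Matrix.det (fun i j : Fin (r + 1) =>
      rfac (l i + (j.val : ℤ) - (i.val : ℤ))) = V / D := by
    field_simp
    linarith [key]
  rw [hdet, mul_div_assoc]
end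

section
/- Let $\lambda = ((g-d+r)^{r+1})$ be a rectangular partition with $s := g-d+r$, and let $\gamma = (\gamma_1 \geq \cdots \geq \gamma_{r+1} \geq 0)$ be a partition. Then the determinant $\zeta^{(\lambda+\gamma)/\lambda} := \det\left( \binom{\lambda_i + \gamma_i + j - i - 1}{\gamma_i + j - i} \right)_{1 \leq i,j \leq r+1}$ (with $\binom{n}{k} = 0$ for $k < 0$) factors as $\zeta^{(\lambda+\gamma)/\lambda} = \det\left( \frac{1}{(\gamma_i + j - i)!} \right)_{1 \leq i,j \leq r+1} \cdot \prod_{i=1}^{r+1} (s + \gamma_i - i)_{\gamma_i}$, where $(n)_k = n(n-1)\cdots(n+1-k)$ is the falling factorial and $1/m! := 0$ for $m < 0$. -/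
open Finset

/-- Falling factorial `(x)_k = x(x-1)⋯(x-k+1)` in `ℚ`. -/
noncomputable def ffac (x : ℚ) (k : ℕ) : ℚ := ∏ m ∈ Finset.range k, (x - m)

/-- Generalized binomial coefficient `binom(n,k)` for integers, equal to `(n)_k / k!`
for `k ≥ 0` and `0` for `k < 0`. -/
noncomputable def qbinom (n k : ℤ) : ℚ :=
  if k < 0 then 0 else ffac (n : ℚ) k.toNat / (k.toNat.factorial : ℚ)

lemma ffac_add (x : ℚ) (p q : ℕ) : ffac x (p + q) = ffac x p * ffac (x - p) q := by
  unfold ffac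
  rw [Finset.prod_range_add]
  congr 1
  refine Finset.prod_congr rfl fun m _ => ?_
  push_cast; ring

lemma ffac_natCast_of_le {N K : ℕ} (h : K ≤ N) :
    ffac (N : ℚ) K = (N.descFactorial K : ℚ) := by
  rw [Nat.descFactorial_eq_prod_range]
  push_cast [Nat.cast_prod]
  refine Finset.prod_congr rfl fun m hm => ?_
  rw [Finset.mem_range] at hm
  rw [Nat.cast_sub (le_of_lt (lt_of_lt_of_le hm h))]

lemma ffac_natCast_of_lt {N K : ℕ} (h : N < K) : ffac (N : ℚ) K = 0 := by
  unfold ffac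
  exact Finset.prod_eq_zero (Finset.mem_range.2 h) (by simp)

lemma ffac_natCast (N K : ℕ) : ffac (N : ℚ) K = (N.descFactorial K : ℚ) := by
  rcases le_or_gt K N with h | h
  · exact ffac_natCast_of_le h
  · rw [ffac_natCast_of_lt h, Nat.descFactorial_eq_zero_iff_lt.2 h, Nat.cast_zero]

lemma choose_cast_eq (N K : ℕ) : (N.choose K : ℚ) = ffac (N : ℚ) K / (K.factorial : ℚ) := by
  rw [ffac_natCast, Nat.descFactorial_eq_factorial_mul_choose]
  push_cast
  field_simp

lemma ffac_mul_factorial {N K : ℕ} (h : K ≤ N) :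
    ffac (N : ℚ) K * ((N - K).factorial : ℚ) = (N.factorial : ℚ) := by
  rw [ffac_natCast, Nat.descFactorial_eq_factorial_mul_choose]
  push_cast
  norm_cast
  rw [mul_comm (Nat.factorial K), Nat.choose_mul_factorial_mul_factorial h]

lemma rfac_eq (M d : ℕ) : rfac ((M : ℤ) - d) = ffac (M : ℚ) d / (M.factorial : ℚ) := by
  unfold rfac
  rcases le_or_gt d M with h | h
  · rw [if_neg (by omega)]
    have : ((M : ℤ) - d).toNat = M - d := by omega
    rw [this, eq_div_iff (show (M.factorial : ℚ) ≠ 0 by positivity), inv_mul_eq_div,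
      div_eq_iff (show (((M - d).factorial : ℕ) : ℚ) ≠ 0 by positivity)]
    exact (ffac_mul_factorial h).symm
  · rw [if_pos (by omega), ffac_natCast_of_lt h, zero_div]

lemma qbinom_natCast (n k : ℕ) : qbinom (n : ℤ) (k : ℤ) = (n.choose k : ℚ) := by
  unfold qbinom
  rw [if_neg (by omega)]
  rw [Int.toNat_natCast, choose_cast_eq]
  norm_cast

lemma zeta_generic (r s : ℕ) (ga : Fin (r + 1) → ℕ) (hs : r + 1 ≤ s) :
    Matrix.det (fun i j : Fin (r + 1) =>
        qbinom ((s : ℤ) + (ga i : ℤ) + (j.val : ℤ) - (i.val : ℤ) - 1)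
          ((ga i : ℤ) + (j.val : ℤ) - (i.val : ℤ))) =
      Matrix.det (fun i j : Fin (r + 1) =>
          rfac ((ga i : ℤ) + (j.val : ℤ) - (i.val : ℤ))) *
        ∏ i : Fin (r + 1), ffac ((s : ℚ) + (ga i : ℚ) - ((i.val : ℚ) + 1)) (ga i) := by
  set N : Fin (r + 1) → ℕ := fun i => s - (i.val + 1) + ga i with hN
  set M : Fin (r + 1) → ℕ := fun i => ga i + (r - i.val) with hM
  set B : Matrix (Fin (r + 1)) (Fin (r + 1)) ℚ :=
    fun i j => rfac ((ga i : ℤ) + (j.val : ℤ) - (i.val : ℤ)) with hB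
  set Φ : Matrix (Fin (r + 1)) (Fin (r + 1)) ℚ :=
    Matrix.of (fun i c => ((N i).choose (s - (c.val + 1)) : ℚ)) with hΦ
  set T : Matrix (Fin (r + 1)) (Fin (r + 1)) ℚ :=
    Matrix.of (fun c j => ((j.val).choose c.val : ℚ)) with hT
  -- Step A : the qbinom matrix equals Φ * T
  have hA : (fun i j : Fin (r + 1) =>
      qbinom ((s : ℤ) + (ga i : ℤ) + (j.val : ℤ) - (i.val : ℤ) - 1)
        ((ga i : ℤ) + (j.val : ℤ) - (i.val : ℤ))) = Φ * T := by
    funext i j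
    show _ = (Φ * T) i j
    rw [Matrix.mul_apply]
    have hi : i.val < r + 1 := i.isLt
    have hj : j.val < r + 1 := j.isLt
    by_cases hk : (ga i : ℤ) + (j.val : ℤ) - (i.val : ℤ) < 0
    · rw [qbinom, if_pos hk]
      symm
      apply Finset.sum_eq_zero
      intro c _
      have hc : c.val < r + 1 := c.isLt
      rcases le_or_gt c.val j.val with hcj | hcj
      · have h0 : N i < s - (c.val + 1) := by simp only [hN]; omega
        simp only [hΦ, hT, Matrix.of_apply, Nat.choose_eq_zero_of_lt h0, Nat.cast_zero, zero_mul]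
      · simp only [hΦ, hT, Matrix.of_apply, Nat.choose_eq_zero_of_lt hcj, Nat.cast_zero, mul_zero]
    · push_neg at hk
      have e1 : (s : ℤ) + (ga i : ℤ) + (j.val : ℤ) - (i.val : ℤ) - 1
          = ((N i + j.val : ℕ) : ℤ) := by simp only [hN]; omega
      have e2 : (ga i : ℤ) + (j.val : ℤ) - (i.val : ℤ)
          = ((ga i + j.val - i.val : ℕ) : ℤ) := by omega
      rw [e1, e2, qbinom_natCast]
      have hle : ga i + j.val - i.val ≤ N i + j.val := by simp only [hN]; omega
      have key : (N i + j.val).choose (ga i + j.val - i.val)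
          = ∑ c ∈ Finset.range (r + 1), (N i).choose (s - (c + 1)) * (j.val).choose c := by
        rw [← Nat.choose_symm hle,
          show N i + j.val - (ga i + j.val - i.val) = s - 1 by simp only [hN]; omega,
          Nat.add_choose_eq, Finset.Nat.sum_antidiagonal_eq_sum_range_succ_mk,
          show (s - 1).succ = s by omega, ← Finset.sum_range_reflect]
        have hsub : Finset.range (r + 1) ⊆ Finset.range s := Finset.range_subset_range.2 hs
        refine (Finset.sum_subset hsub ?_).symm.trans (Finset.sum_congr rfl fun c hc => ?_)
        · intro c hc hcn
          rw [Finset.mem_range] at hc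
          rw [Finset.mem_range, not_lt] at hcn
          dsimp only
          rw [show s - 1 - (s - 1 - c) = c by omega,
            Nat.choose_eq_zero_of_lt (show j.val < c by omega), mul_zero]
        · rw [Finset.mem_range] at hc
          dsimp only
          rw [show s - 1 - (s - 1 - c) = c by omega, show s - 1 - c = s - (c + 1) by omega]
      rw [key]
      push_cast
      rw [← Fin.sum_univ_eq_sum_range
        (fun c => ((N i).choose (s - (c + 1)) : ℚ) * ((j.val).choose c : ℚ)) (r + 1)]
      rfl
  -- Step B : T is upper triangular with unit diagonal
  have hTdet : T.det = 1 := by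
    rw [Matrix.det_of_upperTriangular (M := T)]
    · simp [hT, Nat.choose_self]
    · intro c j hlt
      simp only [hT, Matrix.of_apply,
        Nat.choose_eq_zero_of_lt (show j.val < c.val from hlt), Nat.cast_zero]
  -- Step C : Φ as scaled B
  have hMfac : ∀ i : Fin (r + 1), ((M i).factorial : ℚ) ≠ 0 := fun i => by positivity
  have hΦB : Φ = Matrix.of (fun i c =>
      (ffac ((N i : ℕ) : ℚ) (s - (r + 1)) * ((M i).factorial : ℚ)) *
        (((((s - (c.val + 1)).factorial : ℕ) : ℚ))⁻¹ * B i c)) := by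
    ext i c
    have hi : i.val < r + 1 := i.isLt
    have hc : c.val < r + 1 := c.isLt
    simp only [hΦ, Matrix.of_apply]
    rw [choose_cast_eq, show s - (c.val + 1) = (s - (r + 1)) + (r - c.val) by omega, ffac_add]
    have e4 : ((N i : ℕ) : ℚ) - ((s - (r + 1) : ℕ) : ℚ) = ((M i : ℕ) : ℚ) := by
      have : (N i : ℤ) - ((s - (r + 1) : ℕ) : ℤ) = ((M i : ℕ) : ℤ) := by
        simp only [hN, hM]; omega
      exact_mod_cast congrArg (fun z : ℤ => (z : ℚ)) this
    rw [e4]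
    have e5 : ((M i : ℕ) : ℤ) - ((r - c.val : ℕ) : ℤ)
        = (ga i : ℤ) + (c.val : ℤ) - (i.val : ℤ) := by simp only [hM]; omega
    have e6 : B i c = ffac ((M i : ℕ) : ℚ) (r - c.val) / ((M i).factorial : ℚ) := by
      simp only [hB]
      rw [← e5, rfac_eq]
    rw [e6]
    rw [show s - (r + 1) + (r - c.val) = s - (c.val + 1) by omega]
    field_simp
  rw [hA, Matrix.det_mul, hTdet, mul_one, hΦB]
  rw [show (Matrix.of fun i c =>
      (ffac ((N i : ℕ) : ℚ) (s - (r + 1)) * ((M i).factorial : ℚ)) *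
        (((((s - (c.val + 1)).factorial : ℕ) : ℚ))⁻¹ * B i c))
      = Matrix.of (fun i c =>
        (fun i : Fin (r+1) => ffac ((N i : ℕ) : ℚ) (s - (r + 1)) * ((M i).factorial : ℚ)) i *
        (Matrix.of (fun i c : Fin (r+1) =>
          (fun c : Fin (r+1) => ((((s - (c.val + 1)).factorial : ℕ) : ℚ))⁻¹) c * B i c)) i c)
    from rfl]
  rw [Matrix.det_mul_column, Matrix.det_mul_row]
  -- Step D : scalars combine into the product of falling factorials
  have perI : ∀ i : Fin (r + 1),
      (ffac ((N i : ℕ) : ℚ) (s - (r + 1)) * ((M i).factorial : ℚ)) *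
        ((((s - (i.val + 1)).factorial : ℕ) : ℚ))⁻¹
      = ffac ((s : ℚ) + (ga i : ℚ) - ((i.val : ℚ) + 1)) (ga i) := by
    intro i
    have hi : i.val < r + 1 := i.isLt
    have h1 : ffac ((N i : ℕ) : ℚ) (s - (r + 1)) * ((M i).factorial : ℚ)
        = ((N i).factorial : ℚ) := by
      have h' := ffac_mul_factorial (N := N i) (K := s - (r + 1)) (by simp only [hN]; omega)
      rwa [show N i - (s - (r + 1)) = M i by simp only [hN, hM]; omega] at h'
    have hcast : (s : ℚ) + (ga i : ℚ) - ((i.val : ℚ) + 1) = ((N i : ℕ) : ℚ) := by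
      have : ((N i : ℕ) : ℤ) = (s : ℤ) + (ga i : ℤ) - ((i.val : ℤ) + 1) := by
        simp only [hN]; omega
      have := congrArg (fun z : ℤ => (z : ℚ)) this
      push_cast at this ⊢
      linarith
    have h2 : ffac ((N i : ℕ) : ℚ) (ga i) * (((s - (i.val + 1)).factorial : ℕ) : ℚ)
        = ((N i).factorial : ℚ) := by
      have h' := ffac_mul_factorial (N := N i) (K := ga i) (by simp only [hN]; omega)
      rwa [show N i - ga i = s - (i.val + 1) by simp only [hN]; omega] at h'
    rw [h1, hcast, ← h2]
    field_simp
  have hprod : ∏ i : Fin (r+1), ffac ((s : ℚ) + (ga i : ℚ) - ((i.val : ℚ) + 1)) (ga i)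
      = (∏ i : Fin (r+1), ffac ((N i : ℕ) : ℚ) (s - (r + 1)) * ((M i).factorial : ℚ)) *
        ∏ i : Fin (r+1), ((((s - (i.val + 1)).factorial : ℕ) : ℚ))⁻¹ := by
    rw [← Finset.prod_mul_distrib]
    exact Finset.prod_congr rfl fun i _ => (perI i).symm
  rw [hprod]
  ring

noncomputable def Ap (r : ℕ) (ga : Fin (r + 1) → ℕ) :
    Matrix (Fin (r + 1)) (Fin (r + 1)) (Polynomial ℚ) :=
  Matrix.of fun i j =>
    if ((ga i : ℤ) + (j.val : ℤ) - (i.val : ℤ)) < 0 then 0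
    else Polynomial.C ((((ga i : ℤ) + (j.val : ℤ) - (i.val : ℤ)).toNat.factorial : ℚ))⁻¹ *
      ∏ t ∈ Finset.range ((ga i : ℤ) + (j.val : ℤ) - (i.val : ℤ)).toNat,
        (Polynomial.X + Polynomial.C (t : ℚ))

noncomputable def Rp (r : ℕ) (ga : Fin (r + 1) → ℕ) (i : Fin (r + 1)) : Polynomial ℚ :=
  ∏ m ∈ Finset.range (ga i), (Polynomial.X + Polynomial.C ((ga i : ℚ) - ((i.val : ℚ) + 1) - m))

lemma evalRp (r : ℕ) (ga : Fin (r + 1) → ℕ) (i : Fin (r + 1)) (x : ℚ) :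
    Polynomial.eval x (Rp r ga i) = ffac (x + (ga i : ℚ) - ((i.val : ℚ) + 1)) (ga i) := by
  unfold Rp ffac
  rw [Polynomial.eval_prod]
  refine Finset.prod_congr rfl fun m _ => ?_
  simp only [Polynomial.eval_add, Polynomial.eval_X, Polynomial.eval_C]
  ring

lemma evalAp (r : ℕ) (ga : Fin (r + 1) → ℕ) (m : ℕ) (i j : Fin (r + 1)) :
    Polynomial.eval ((m : ℕ) : ℚ) (Ap r ga i j)
      = qbinom ((m : ℤ) + (ga i : ℤ) + (j.val : ℤ) - (i.val : ℤ) - 1)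
          ((ga i : ℤ) + (j.val : ℤ) - (i.val : ℤ)) := by
  unfold Ap qbinom
  by_cases hk : ((ga i : ℤ) + (j.val : ℤ) - (i.val : ℤ)) < 0
  · rw [Matrix.of_apply, if_pos hk, if_pos hk, Polynomial.eval_zero]
  · rw [Matrix.of_apply, if_neg hk, if_neg hk]
    set K : ℕ := ((ga i : ℤ) + (j.val : ℤ) - (i.val : ℤ)).toNat with hK
    simp only [Polynomial.eval_mul, Polynomial.eval_C, Polynomial.eval_prod,
      Polynomial.eval_add, Polynomial.eval_X]
    have hffac : ffac ((((m : ℤ) + (ga i : ℤ) + (j.val : ℤ) - (i.val : ℤ) - 1 : ℤ)) : ℚ) K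
        = ∏ t ∈ Finset.range K, ((m : ℚ) + (t : ℚ)) := by
      unfold ffac
      rw [← Finset.prod_range_reflect]
      refine Finset.prod_congr rfl fun t ht => ?_
      rw [Finset.mem_range] at ht
      have hz : ((m : ℤ) + (ga i : ℤ) + (j.val : ℤ) - (i.val : ℤ) - 1) - (t : ℤ)
          = (m : ℤ) + ((K - 1 - t : ℕ) : ℤ) := by omega
      have := congrArg (fun z : ℤ => (z : ℚ)) hz
      push_cast at this
      push_cast
      linarith
    rw [hffac, div_eq_inv_mul]

lemma mapAp (r : ℕ) (ga : Fin (r + 1) → ℕ) (m : ℕ) :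
    (Ap r ga).map (Polynomial.evalRingHom ((m : ℕ) : ℚ))
      = fun i j : Fin (r + 1) =>
          qbinom ((m : ℤ) + (ga i : ℤ) + (j.val : ℤ) - (i.val : ℤ) - 1)
            ((ga i : ℤ) + (j.val : ℤ) - (i.val : ℤ)) := by
  funext i j
  show Polynomial.eval ((m : ℕ) : ℚ) (Ap r ga i j) = _
  exact evalAp r ga m i j

theorem zeta_factorization (r s : ℕ) (ga : Fin (r + 1) → ℕ) (hga : Antitone ga) :
    Matrix.det (fun i j : Fin (r + 1) =>
        qbinom ((s : ℤ) + (ga i : ℤ) + (j.val : ℤ) - (i.val : ℤ) - 1)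
          ((ga i : ℤ) + (j.val : ℤ) - (i.val : ℤ))) =
      Matrix.det (fun i j : Fin (r + 1) =>
          rfac ((ga i : ℤ) + (j.val : ℤ) - (i.val : ℤ))) *
        ∏ i : Fin (r + 1), ffac ((s : ℚ) + (ga i : ℚ) - ((i.val : ℚ) + 1)) (ga i) := by
  have main : (Ap r ga).det
      = Polynomial.C (Matrix.det (fun i j : Fin (r + 1) =>
          rfac ((ga i : ℤ) + (j.val : ℤ) - (i.val : ℤ)))) * ∏ i : Fin (r + 1), Rp r ga i := by
    apply Polynomial.eq_of_infinite_eval_eq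
    apply Set.infinite_of_injective_forall_mem
      (f := fun n : ℕ => (((n + (r + 1) : ℕ) : ℕ) : ℚ))
    case hi =>
      intro a b hab
      have : ((a + (r + 1) : ℕ) : ℚ) = ((b + (r + 1) : ℕ) : ℚ) := hab
      exact_mod_cast Nat.add_right_cancel (Nat.cast_injective this)
    case hf =>
      intro n
      set m : ℕ := n + (r + 1) with hm
      show Polynomial.eval ((m : ℕ) : ℚ) (Ap r ga).det = Polynomial.eval ((m : ℕ) : ℚ) _
      have h1 : Polynomial.eval ((m : ℕ) : ℚ) (Ap r ga).det
          = Matrix.det (fun i j : Fin (r + 1) =>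
              qbinom ((m : ℤ) + (ga i : ℤ) + (j.val : ℤ) - (i.val : ℤ) - 1)
                ((ga i : ℤ) + (j.val : ℤ) - (i.val : ℤ))) := by
        have := RingHom.map_det (Polynomial.evalRingHom ((m : ℕ) : ℚ)) (Ap r ga)
        rw [RingHom.mapMatrix_apply, mapAp r ga m] at this
        exact this
      rw [h1, zeta_generic r m ga (by omega)]
      rw [Polynomial.eval_mul, Polynomial.eval_C, Polynomial.eval_prod]
      congr 1
      exact Finset.prod_congr rfl fun i _ => (evalRp r ga i ((m : ℕ) : ℚ)).symm
  have := congrArg (Polynomial.eval ((s : ℕ) : ℚ)) main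
  rw [Polynomial.eval_mul, Polynomial.eval_C, Polynomial.eval_prod] at this
  have h1 : Polynomial.eval ((s : ℕ) : ℚ) (Ap r ga).det
      = Matrix.det (fun i j : Fin (r + 1) =>
          qbinom ((s : ℤ) + (ga i : ℤ) + (j.val : ℤ) - (i.val : ℤ) - 1)
            ((ga i : ℤ) + (j.val : ℤ) - (i.val : ℤ))) := by
    have h2 := RingHom.map_det (Polynomial.evalRingHom ((s : ℕ) : ℚ)) (Ap r ga)
    rw [RingHom.mapMatrix_apply, mapAp r ga s] at h2
    exact h2
  rw [h1] at this
  rw [this]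
  congr 1
  exact Finset.prod_congr rfl fun i _ => evalRp r ga i ((s : ℕ) : ℚ)
end

section
/- For a 321-avoiding permutation $w$ of $\{1,\dots,n\}$ determined by decreasing sequences $p_1 > \cdots > p_t > 0$ and $q_1 > \cdots > q_t > 0$ with $q_i \geq p_i - 1$ for all $i$, via $w(p_i) = q_i + 1$ (filling in remaining values in increasing order), $w$ is the unique permutation of minimal length such that $\#\{p \leq p_j \mid w(p) > q_i\} \geq 1 + i - j$ for all $1 \leq i, j \leq t$, and the length of $w$ equals $\sum_{i=1}^{t}(q_i - p_i + 1)$. -/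
/-!
Let `L = ∑ i, (q i + 1 - p i)` be the total size of the boxes `[p i, q i]`. At least `u x - x`
inversions start at `x`, and `∑ x, (u x - x)` counts, for every `a`, the positions `x ≤ a`
with `u x > a`; the rank condition forces at least as many of them as there are boxes
containing `a`. Hence every permutation satisfying the rank condition has length at least `L`.
The permutation `w` attains it, since off the corners it is increasing and lies weakly below
the diagonal.

Conversely, length `L` makes all these inequalities equalities. Then excedance values increase
from left to right and each non-excedance is smaller than all later values; together with the
tight rank counts this pins the corner values to `q i + 1` and makes the other positions
non-excedances, hence increasing. Such a bijection is unique.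
-/

open Finset

/-- The number of inversions of `w` on `{1, …, n}` (the length of the permutation). -/
def permLength (n : ℕ) (w : ℕ → ℕ) : ℕ :=
  (((Finset.Icc 1 n) ×ˢ (Finset.Icc 1 n)).filter
    (fun ab => ab.1 < ab.2 ∧ w ab.2 < w ab.1)).card

namespace Perm321

section Inversions

variable {n : ℕ} {u : ℕ → ℕ}

def inversionsFrom (n : ℕ) (u : ℕ → ℕ) (x : ℕ) : ℕ :=
  #{y ∈ Icc 1 n | x < y ∧ u y < u x}

lemma permLength_eq_sum_inversionsFrom (n : ℕ) (u : ℕ → ℕ) :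
    permLength n u = ∑ x ∈ Icc 1 n, inversionsFrom n u x := by
  simp only [permLength, inversionsFrom, card_filter, sum_product]

lemma card_before_le (x : ℕ) : #{y ∈ Icc 1 n | y < x ∧ u y < u x} ≤ x - 1 :=
  (card_le_card fun y hy => by simp only [mem_filter, mem_Icc, mem_Ico] at hy ⊢; omega).trans
    (Nat.card_Ico 1 x).le

lemma card_before_eq_iff {x : ℕ} (hx : x ≤ n) :
    #{y ∈ Icc 1 n | y < x ∧ u y < u x} = x - 1 ↔ ∀ y ∈ Ico 1 x, u y < u x := by
  have hsub : {y ∈ Icc 1 n | y < x ∧ u y < u x} ⊆ Ico 1 x := fun y hy => by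
    simp only [mem_filter, mem_Icc, mem_Ico] at hy ⊢; omega
  rw [← Nat.card_Ico 1 x]
  constructor
  · intro h y hy
    rw [← (eq_iff_card_le_of_subset hsub).1 h.ge] at hy
    exact (mem_filter.1 hy).2.2
  · intro h
    refine le_antisymm (card_le_card hsub) (card_le_card fun y hy => ?_)
    have hy' := mem_Ico.1 hy
    exact mem_filter.2 ⟨mem_Icc.2 ⟨hy'.1, by omega⟩, hy'.2, h y hy⟩

variable (hu : Set.BijOn u (Set.Icc 1 n) (Set.Icc 1 n))
include hu

lemma card_filter_lt_of_bijOn {v : ℕ} (hv : v ≤ n + 1) :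
    #{x ∈ Icc 1 n | u x < v} = v - 1 := by
  rw [← Nat.card_Ico 1 v]
  refine card_nbij u (fun x hx => ?_) (hu.injOn.mono fun x hx => ?_) (fun c hc => ?_)
  · simp only [coe_filter, mem_Icc, Set.mem_ofPred_eq, coe_Ico, Set.mem_Ico] at hx ⊢
    exact ⟨(hu.mapsTo hx.1).1, hx.2⟩
  · simp only [coe_filter, mem_Icc, Set.mem_ofPred_eq] at hx
    exact hx.1
  · simp only [coe_Ico, Set.mem_Ico] at hc
    obtain ⟨x, hx, rfl⟩ := hu.surjOn (⟨hc.1, by omega⟩ : c ∈ Set.Icc 1 n)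
    exact ⟨x, by simpa only [coe_filter, mem_Icc, Set.mem_ofPred_eq] using ⟨hx, hc.2⟩, rfl⟩

lemma card_before_add_inversionsFrom {x : ℕ} (hx : x ∈ Icc 1 n) :
    #{y ∈ Icc 1 n | y < x ∧ u y < u x} + inversionsFrom n u x = u x - 1 := by
  obtain ⟨hux, hux'⟩ := hu.mapsTo (Set.mem_Icc.2 (mem_Icc.1 hx))
  rw [inversionsFrom, ← card_union_of_disjoint (disjoint_filter.2 fun y _ h h' => by omega),
    ← filter_or, ← card_filter_lt_of_bijOn hu (v := u x) (by omega)]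
  refine congrArg card
    (filter_congr fun y _ => ⟨fun h => h.elim And.right And.right, fun h => ?_⟩)
  rcases lt_trichotomy y x with hyx | rfl | hxy
  · exact .inl ⟨hyx, h⟩
  · exact absurd h (lt_irrefl _)
  · exact .inr ⟨hxy, h⟩

lemma sub_le_inversionsFrom {x : ℕ} (hx : x ∈ Icc 1 n) : u x - x ≤ inversionsFrom n u x := by
  have := card_before_add_inversionsFrom hu hx
  have := card_before_le (n := n) (u := u) x
  have := mem_Icc.1 hx
  omega

lemma inversionsFrom_eq_sub_iff {x : ℕ} (hx : x ∈ Icc 1 n) (hxu : x ≤ u x) :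
    inversionsFrom n u x = u x - x ↔ ∀ y ∈ Ico 1 x, u y < u x := by
  have := card_before_add_inversionsFrom hu hx
  have := card_before_le (n := n) (u := u) x
  have := mem_Icc.1 hx
  rw [← card_before_eq_iff (mem_Icc.1 hx).2]
  omega

lemma inversionsFrom_eq_zero_iff {x : ℕ} (hx : x ∈ Icc 1 n) :
    inversionsFrom n u x = 0 ↔ ∀ y ∈ Icc 1 n, x < y → u x < u y := by
  simp only [inversionsFrom, card_eq_zero, filter_eq_empty_iff, not_and, not_lt]
  refine forall₂_congr fun y hy =>
    ⟨fun h hxy => (h hxy).lt_of_ne fun he => ?_, fun h hxy => (h hxy).le⟩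
  exact hxy.ne (hu.injOn (Set.mem_Icc.2 (mem_Icc.1 hx)) (Set.mem_Icc.2 (mem_Icc.1 hy)) he)

end Inversions

section Excedance

variable {n : ℕ} {u : ℕ → ℕ}

/-- Truncated subtraction makes `u x - x` the excess of an excedance and `0` elsewhere. -/
def totalExcedance (n : ℕ) (u : ℕ → ℕ) : ℕ := ∑ x ∈ Icc 1 n, (u x - x)

lemma totalExcedance_eq_sum_corners_add {t : ℕ} {p : Fin t → ℕ} (hp : Function.Injective p)
    (hP : univ.image p ⊆ Icc 1 n) :
    totalExcedance n u = ∑ i, (u (p i) - p i) + ∑ x ∈ Icc 1 n \ univ.image p, (u x - x) := by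
  rw [totalExcedance, ← sum_sdiff hP, sum_image hp.injOn, add_comm]

variable (hu : Set.BijOn u (Set.Icc 1 n) (Set.Icc 1 n))
include hu

lemma totalExcedance_le_permLength : totalExcedance n u ≤ permLength n u := by
  rw [permLength_eq_sum_inversionsFrom]
  exact sum_le_sum fun x hx => sub_le_inversionsFrom hu hx

variable (hℓ : permLength n u = totalExcedance n u)
include hℓ

lemma inversionsFrom_eq_sub_of_permLength_eq {x : ℕ} (hx : x ∈ Icc 1 n) :
    inversionsFrom n u x = u x - x := by
  refine ((sum_eq_sum_iff_of_le fun x hx => sub_le_inversionsFrom hu hx).1 ?_ x hx).symm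
  rw [← totalExcedance, ← permLength_eq_sum_inversionsFrom, hℓ]

lemma apply_lt_of_excedance {x y : ℕ} (hx : x ∈ Icc 1 n) (hxu : x < u x) (hy : y ∈ Ico 1 x) :
    u y < u x :=
  (inversionsFrom_eq_sub_iff hu hx hxu.le).1
    (inversionsFrom_eq_sub_of_permLength_eq hu hℓ hx) y hy

lemma apply_lt_of_nonexcedance {x y : ℕ} (hx : x ∈ Icc 1 n) (hux : u x ≤ x)
    (hy : y ∈ Icc 1 n) (hxy : x < y) : u x < u y := by
  refine (inversionsFrom_eq_zero_iff hu hx).1 ?_ y hy hxy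
  rw [inversionsFrom_eq_sub_of_permLength_eq hu hℓ hx]
  omega

/-- The `a - 1` positions carrying the values below a fixed point `a` cannot lie after `a`, so
they fill up `[1, a)`. -/
lemma apply_le_of_fixed {a x : ℕ} (ha : a ∈ Icc 1 n) (hfix : u a = a) (hx : x ∈ Icc 1 a) :
    u x ≤ a := by
  have hsub : {y ∈ Icc 1 n | u y < a} ⊆ Ico 1 a := fun y hy => by
    rw [mem_filter] at hy
    refine mem_Ico.2 ⟨(mem_Icc.1 hy.1).1, lt_of_not_ge fun hay => ?_⟩
    rcases hay.eq_or_lt with rfl | hay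
    · exact hy.2.ne hfix
    · have := apply_lt_of_nonexcedance hu hℓ ha hfix.le hy.1 hay
      omega
  have heq := (eq_iff_card_le_of_subset hsub).1
    (by rw [Nat.card_Ico, card_filter_lt_of_bijOn hu (by have := mem_Icc.1 ha; omega)])
  rcases (mem_Icc.1 hx).2.eq_or_lt with rfl | hxa
  · exact hfix.le
  · have : x ∈ {y ∈ Icc 1 n | u y < a} := heq ▸ mem_Ico.2 ⟨(mem_Icc.1 hx).1, hxa⟩
    exact (mem_filter.1 this).2.le

end Excedance

section Rank

variable {n t : ℕ} {p q : Fin t → ℕ} {u : ℕ → ℕ}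

def rankAbove (u : ℕ → ℕ) (a b : ℕ) : ℕ := #{x ∈ Icc 1 a | b < u x}

lemma rankAbove_mono (u : ℕ → ℕ) {a a' b b' : ℕ} (ha : a ≤ a') (hb : b' ≤ b) :
    rankAbove u a b ≤ rankAbove u a' b' :=
  card_le_card fun x hx => by simp only [mem_filter, mem_Icc] at hx ⊢; omega

def RankCond (p q : Fin t → ℕ) (u : ℕ → ℕ) : Prop :=
  ∀ i j : Fin t, (1 : ℤ) + (i.val : ℤ) - (j.val : ℤ) ≤ (rankAbove u (p j) (q i) : ℤ)

lemma RankCond.le_rankAbove (h : RankCond p q u) {i j : Fin t} (hji : j ≤ i) :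
    i.val + 1 - j.val ≤ rankAbove u (p j) (q i) := by
  have := h i j
  have : j.val ≤ i.val := hji
  omega

lemma rankCond_of_apply_eq (hp : StrictAnti p) (hq : StrictAnti q) (hppos : ∀ i, 0 < p i)
    (hu : ∀ i, u (p i) = q i + 1) : RankCond p q u := by
  intro i j
  rcases lt_or_ge i j with hij | hji
  · have : i.val < j.val := hij
    omega
  have hsub : (Icc j i).image p ⊆ {x ∈ Icc 1 (p j) | q i < u x} := fun x hx => by
    obtain ⟨m, hm, rfl⟩ := mem_image.1 hx
    rw [mem_Icc] at hm
    have := hp.antitone hm.1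
    have := hq.antitone hm.2
    have := hppos m
    simp only [mem_filter, mem_Icc, hu]
    omega
  have := card_le_card hsub
  rw [card_image_of_injective _ hp.injective, Fin.card_Icc] at this
  have : j.val ≤ i.val := hji
  unfold rankAbove
  omega

def coverCount (p q : Fin t → ℕ) (a : ℕ) : ℕ := #{i | p i ≤ a ∧ a ≤ q i}

lemma sum_coverCount (hppos : ∀ i, 0 < p i) (hqn : ∀ i, q i ≤ n) :
    ∑ a ∈ Icc 1 n, coverCount p q a = ∑ i, (q i + 1 - p i) := by
  simp only [coverCount, card_filter]
  rw [sum_comm]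
  refine sum_congr rfl fun i _ => ?_
  rw [← card_filter, ← Nat.card_Icc]
  congr 1
  ext a
  have := hppos i
  have := hqn i
  simp only [mem_filter, mem_Icc]
  omega

/-- The boxes containing `a` lie between the first and the last of them, `j₀` and `i₀`, so the
condition at `(i₀, j₀)` bounds their number. -/
lemma coverCount_le_rankAbove (h : RankCond p q u) (a : ℕ) :
    coverCount p q a ≤ rankAbove u a a := by
  set B : Finset (Fin t) := {i | p i ≤ a ∧ a ≤ q i}
  rcases B.eq_empty_or_nonempty with hB | hB
  · exact (card_eq_zero.2 hB).trans_le (Nat.zero_le _)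
  have hj := (mem_filter.1 (B.min'_mem hB)).2
  have hi := (mem_filter.1 (B.max'_mem hB)).2
  calc coverCount p q a ≤ #(Icc (B.min' hB) (B.max' hB)) :=
        card_le_card fun m hm => mem_Icc.2 ⟨B.min'_le m hm, B.le_max' m hm⟩
    _ = (B.max' hB).val + 1 - (B.min' hB).val := Fin.card_Icc _ _
    _ ≤ rankAbove u (p (B.min' hB)) (q (B.max' hB)) :=
        h.le_rankAbove (B.min'_le _ (B.max'_mem hB))
    _ ≤ rankAbove u a a := rankAbove_mono u hj.1 hi.2

lemma totalExcedance_eq_sum_rankAbove (hu : Set.MapsTo u (Set.Icc 1 n) (Set.Icc 1 n)) :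
    totalExcedance n u = ∑ a ∈ Icc 1 n, rankAbove u a a := by
  have hcount :
      ∀ x ∈ Icc 1 n, u x - x = ∑ a ∈ Icc 1 n, if x ≤ a ∧ a < u x then 1 else 0 := by
    intro x hx
    have := mem_Icc.1 hx
    have := hu (Set.mem_Icc.2 this)
    rw [← card_filter, ← Nat.card_Ico]
    congr 1
    ext a
    simp only [mem_filter, mem_Icc, mem_Ico, Set.mem_Icc] at this ⊢
    omega
  rw [totalExcedance, sum_congr rfl hcount, sum_comm]
  refine sum_congr rfl fun a ha => ?_
  rw [rankAbove, card_filter, ← sum_filter, ← sum_filter]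
  congr 1
  ext x
  have := mem_Icc.1 ha
  simp only [mem_filter, mem_Icc]
  omega

variable (hu : Set.MapsTo u (Set.Icc 1 n) (Set.Icc 1 n)) (hppos : ∀ i, 0 < p i)
  (hqn : ∀ i, q i ≤ n) (hcond : RankCond p q u)
include hu hppos hqn hcond

lemma sum_le_totalExcedance : ∑ i, (q i + 1 - p i) ≤ totalExcedance n u := by
  rw [← sum_coverCount hppos hqn, totalExcedance_eq_sum_rankAbove hu]
  exact sum_le_sum fun a _ => coverCount_le_rankAbove hcond a

omit hu in
lemma sum_le_permLength (hu : Set.BijOn u (Set.Icc 1 n) (Set.Icc 1 n)) :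
    ∑ i, (q i + 1 - p i) ≤ permLength n u :=
  (sum_le_totalExcedance hu.mapsTo hppos hqn hcond).trans (totalExcedance_le_permLength hu)

lemma rankAbove_eq_coverCount (he : totalExcedance n u = ∑ i, (q i + 1 - p i)) {a : ℕ}
    (ha : a ∈ Icc 1 n) : rankAbove u a a = coverCount p q a := by
  refine ((sum_eq_sum_iff_of_le fun a _ => coverCount_le_rankAbove hcond a).1 ?_ a ha).symm
  rw [sum_coverCount hppos hqn, ← totalExcedance_eq_sum_rankAbove hu, he]

end Rank

section Fill

lemma card_Icc_sdiff_lt {Q : Finset ℕ} {c c' : ℕ} (hc : c < c') (hc' : c' ∉ Q) :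
    #(Icc 1 c \ Q) < #(Icc 1 c' \ Q) := by
  refine card_lt_card ((ssubset_iff_of_subset
    (sdiff_subset_sdiff (Icc_subset_Icc_right hc.le) le_rfl)).2 ⟨c', ?_, ?_⟩)
  · exact mem_sdiff.2 ⟨mem_Icc.2 ⟨by omega, le_rfl⟩, hc'⟩
  · simp only [mem_sdiff, mem_Icc, not_and]
    omega

lemma card_Icc_sdiff_image_add_card_filter {t : ℕ} {f : Fin t → ℕ} (hf : Function.Injective f)
    (hpos : ∀ m, 0 < f m) (c : ℕ) : #(Icc 1 c \ univ.image f) + #{m | f m ≤ c} = c := by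
  have hinter : Icc 1 c ∩ univ.image f = ({m | f m ≤ c} : Finset (Fin t)).image f := by
    ext x
    simp only [mem_inter, mem_Icc, mem_image, mem_univ, true_and, mem_filter]
    constructor
    · rintro ⟨⟨-, hx⟩, m, rfl⟩
      exact ⟨m, hx, rfl⟩
    · rintro ⟨m, hm, rfl⟩
      exact ⟨⟨hpos m, hm⟩, m, rfl⟩
  rw [← card_image_of_injective _ hf, ← hinter, card_sdiff_add_card_inter, Nat.card_Icc]
  omega

lemma card_filter_le_apply {t : ℕ} {f : Fin t → ℕ} (hf : StrictAnti f) (i : Fin t) :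
    #{m | f m ≤ f i} = t - i := by
  rw [← Fin.card_Ici]
  congr 1
  ext m
  simp [hf.le_iff_ge]

variable {n : ℕ} {u v : ℕ → ℕ} {P : Finset ℕ}

lemma apply_notMem_image (hu : Set.InjOn u (Set.Icc 1 n)) (hP : P ⊆ Icc 1 n) {x : ℕ}
    (hx : x ∈ Icc 1 n \ P) : u x ∉ P.image u := by
  rw [mem_sdiff] at hx
  rintro hux
  obtain ⟨y, hy, hyx⟩ := mem_image.1 hux
  have := hu (Set.mem_Icc.2 (mem_Icc.1 (hP hy))) (Set.mem_Icc.2 (mem_Icc.1 hx.1)) hyx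
  exact hx.2 (this ▸ hy)

/-- A bijection that is increasing off `P` maps the points of `[1, x] \ P` onto
`[1, u x] \ u(P)`. -/
lemma card_Icc_sdiff_eq_of_strictMonoOn (hu : Set.BijOn u (Set.Icc 1 n) (Set.Icc 1 n))
    (hP : P ⊆ Icc 1 n) (hmono : StrictMonoOn u ↑(Icc 1 n \ P)) {x : ℕ}
    (hx : x ∈ Icc 1 n \ P) :
    #(Icc 1 x \ P) = #(Icc 1 (u x) \ P.image u) := by
  have hxn := mem_Icc.1 (mem_sdiff.1 hx).1
  have hmem : ∀ {y}, y ∈ Icc 1 x \ P → y ∈ Icc 1 n \ P := fun hy => by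
    simp only [mem_sdiff, mem_Icc] at hy ⊢
    exact ⟨⟨hy.1.1, hy.1.2.trans hxn.2⟩, hy.2⟩
  refine card_nbij u (fun y hy => ?_) (hu.injOn.mono fun y hy => ?_) (fun c hc => ?_)
  · have hy' := hmem (mem_coe.1 hy)
    refine mem_coe.2 (mem_sdiff.2 ⟨mem_Icc.2 ⟨(hu.mapsTo (Set.mem_Icc.2
      (mem_Icc.1 (mem_sdiff.1 hy').1))).1, ?_⟩, apply_notMem_image hu.injOn hP hy'⟩)
    exact hmono.monotoneOn hy' hx (mem_Icc.1 (mem_sdiff.1 (mem_coe.1 hy)).1).2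
  · exact Set.mem_Icc.2 (mem_Icc.1 (mem_sdiff.1 (hmem (mem_coe.1 hy))).1)
  · obtain ⟨hc, hcP⟩ := mem_sdiff.1 (mem_coe.1 hc)
    have hc := mem_Icc.1 hc
    have hux := (hu.mapsTo (Set.mem_Icc.2 hxn)).2
    obtain ⟨y, hy, rfl⟩ := hu.surjOn (Set.mem_Icc.2 ⟨hc.1, hc.2.trans hux⟩)
    have hyP : y ∉ P := fun h => hcP (mem_image_of_mem u h)
    have hy' : y ∈ Icc 1 n \ P := mem_sdiff.2 ⟨mem_Icc.2 hy, hyP⟩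
    have hyx : y ≤ x := le_of_not_gt fun hxy => (hmono hx hy' hxy).not_ge hc.2
    exact ⟨y, mem_coe.2 (mem_sdiff.2 ⟨mem_Icc.2 ⟨hy.1, hyx⟩, hyP⟩), rfl⟩

lemma eqOn_of_strictMonoOn_sdiff (hu : Set.BijOn u (Set.Icc 1 n) (Set.Icc 1 n))
    (hv : Set.BijOn v (Set.Icc 1 n) (Set.Icc 1 n)) (hP : P ⊆ Icc 1 n)
    (humono : StrictMonoOn u ↑(Icc 1 n \ P)) (hvmono : StrictMonoOn v ↑(Icc 1 n \ P))
    (heq : ∀ x ∈ P, u x = v x) {x : ℕ} (hx : x ∈ Icc 1 n) : u x = v x := by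
  by_cases hxP : x ∈ P
  · exact heq x hxP
  have hx' : x ∈ Icc 1 n \ P := mem_sdiff.2 ⟨hx, hxP⟩
  have himage : P.image u = P.image v := image_congr heq
  have hcard := (card_Icc_sdiff_eq_of_strictMonoOn hu hP humono hx').symm.trans
    (card_Icc_sdiff_eq_of_strictMonoOn hv hP hvmono hx')
  have hux := apply_notMem_image hu.injOn hP hx'
  have hvx := apply_notMem_image hv.injOn hP hx'
  rw [himage] at hcard hux
  rcases lt_trichotomy (u x) (v x) with h | h | h
  · exact absurd hcard (card_Icc_sdiff_lt h hvx).ne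
  · exact h
  · exact absurd hcard (card_Icc_sdiff_lt h hux).ne'

end Fill

lemma image_subset_Icc {n t : ℕ} {p : Fin t → ℕ} (hppos : ∀ i, 0 < p i)
    (hpn : ∀ i, p i ≤ n) :
    univ.image p ⊆ Icc 1 n := fun x hx => by
  obtain ⟨i, -, rfl⟩ := mem_image.1 hx
  exact mem_Icc.2 ⟨hppos i, hpn i⟩

lemma card_Icc_sdiff_corners_eq {n t : ℕ} {p q : Fin t → ℕ} {w : ℕ → ℕ}
    (hppos : ∀ i, 0 < p i) (hpn : ∀ i, p i ≤ n) (hw : Set.BijOn w (Set.Icc 1 n) (Set.Icc 1 n))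
    (hwdef : ∀ i, w (p i) = q i + 1) (hwmono : StrictMonoOn w ↑(Icc 1 n \ univ.image p))
    {x : ℕ} (hx : x ∈ Icc 1 n \ univ.image p) :
    #(Icc 1 x \ univ.image p) = #(Icc 1 (w x) \ univ.image fun m => q m + 1) ∧
      w x ∉ univ.image fun m => q m + 1 := by
  have hP := image_subset_Icc hppos hpn
  have hQ : (univ.image p).image w = univ.image fun m => q m + 1 := by
    rw [image_image]
    exact image_congr fun m _ => hwdef m
  rw [← hQ]
  exact ⟨card_Icc_sdiff_eq_of_strictMonoOn hw hP hwmono hx, apply_notMem_image hw.injOn hP hx⟩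

section Construction

variable {n t : ℕ} {p q : Fin t → ℕ} {w : ℕ → ℕ}
  (hp : StrictAnti p) (hq : StrictAnti q) (hppos : ∀ i, 0 < p i) (hskew : ∀ i, p i ≤ q i + 1)
  (hpn : ∀ i, p i ≤ n) (hw : Set.BijOn w (Set.Icc 1 n) (Set.Icc 1 n))
  (hwdef : ∀ i, w (p i) = q i + 1) (hwmono : StrictMonoOn w ↑(Icc 1 n \ univ.image p))
include hp hq hppos hskew hpn hw hwdef hwmono

/-- Counting points off the corners: `[1, x]` contains at most `p i - (t - i)` non-corner
positions, while `[1, w x]` would contain more than `q i + 1 - (t - i)` non-corner values if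
`w x > q i`. -/
lemma apply_le_of_le_corner {x : ℕ} (hx : x ∈ Icc 1 n \ univ.image p) {i : Fin t}
    (hxi : x ≤ p i) : w x ≤ q i := by
  by_contra! hlt
  have hq' : StrictAnti fun m => q m + 1 := fun a b hab => Nat.succ_lt_succ (hq hab)
  obtain ⟨hfill, hwx⟩ := card_Icc_sdiff_corners_eq hppos hpn hw hwdef hwmono hx
  have hne : w x ≠ q i + 1 := fun h => hwx (mem_image.2 ⟨i, mem_univ _, h.symm⟩)
  have hgt := card_Icc_sdiff_lt (by omega : q i + 1 < w x) hwx
  have hle : #(Icc 1 x \ univ.image p) ≤ #(Icc 1 (p i) \ univ.image p) :=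
    card_le_card (sdiff_subset_sdiff (Icc_subset_Icc_right hxi) le_rfl)
  have hcountP := card_Icc_sdiff_image_add_card_filter hp.injective hppos (p i)
  have hcountQ := card_Icc_sdiff_image_add_card_filter hq'.injective (fun m => (q m).succ_pos)
    (q i + 1)
  rw [card_filter_le_apply hp] at hcountP
  rw [card_filter_le_apply hq'] at hcountQ
  have := hskew i
  omega

lemma apply_le_self {x : ℕ} (hx : x ∈ Icc 1 n \ univ.image p) : w x ≤ x := by
  have hfill := (card_Icc_sdiff_corners_eq hppos hpn hw hwdef hwmono hx).1
  have hsub : ({m | q m + 1 ≤ w x} : Finset (Fin t)) ⊆ ({m | p m ≤ x} : Finset (Fin t)) :=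
    fun m hm => by
    simp only [mem_filter, mem_univ, true_and] at hm ⊢
    by_contra! h
    have := apply_le_of_le_corner hp hq hppos hskew hpn hw hwdef hwmono hx h.le
    omega
  have := card_le_card hsub
  have := card_Icc_sdiff_image_add_card_filter hp.injective hppos x
  have := card_Icc_sdiff_image_add_card_filter (f := fun m => q m + 1)
    (fun a b hab => hq.injective (Nat.succ_injective hab)) (fun m => (q m).succ_pos) (w x)
  omega

lemma inversionsFrom_le_sub {x : ℕ} (hx : x ∈ Icc 1 n) : inversionsFrom n w x ≤ w x - x := by
  by_cases hxP : x ∈ univ.image p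
  · obtain ⟨i, -, rfl⟩ := mem_image.1 hxP
    refine ((inversionsFrom_eq_sub_iff hw hx (by rw [hwdef]; exact hskew i)).2 fun y hy => ?_).le
    rw [mem_Ico] at hy
    rw [hwdef]
    by_cases hyP : y ∈ univ.image p
    · obtain ⟨m, -, rfl⟩ := mem_image.1 hyP
      rw [hwdef]
      have := hq (hp.lt_iff_gt.1 hy.2)
      omega
    · have hy' : y ∈ Icc 1 n \ univ.image p :=
        mem_sdiff.2 ⟨mem_Icc.2 ⟨hy.1, hy.2.le.trans (mem_Icc.1 hx).2⟩, hyP⟩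
      have := apply_le_of_le_corner hp hq hppos hskew hpn hw hwdef hwmono hy' hy.2.le
      omega
  · have hx' : x ∈ Icc 1 n \ univ.image p := mem_sdiff.2 ⟨hx, hxP⟩
    refine ((inversionsFrom_eq_zero_iff hw hx).2 fun y hy hxy => ?_).trans_le (Nat.zero_le _)
    by_cases hyP : y ∈ univ.image p
    · obtain ⟨m, -, rfl⟩ := mem_image.1 hyP
      have := apply_le_self hp hq hppos hskew hpn hw hwdef hwmono hx'
      have := hskew m
      rw [hwdef]
      omega
    · exact hwmono hx' (mem_sdiff.2 ⟨hy, hyP⟩) hxy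

lemma permLength_le_sum : permLength n w ≤ ∑ i, (q i + 1 - p i) :=
  calc permLength n w = ∑ x ∈ Icc 1 n, inversionsFrom n w x :=
        permLength_eq_sum_inversionsFrom n w
    _ ≤ totalExcedance n w :=
        sum_le_sum fun x hx => inversionsFrom_le_sub hp hq hppos hskew hpn hw hwdef hwmono hx
    _ = ∑ i, (q i + 1 - p i) := by
        rw [totalExcedance_eq_sum_corners_add hp.injective (image_subset_Icc hppos hpn),
          sum_eq_zero fun x hx => Nat.sub_eq_zero_of_le
            (apply_le_self hp hq hppos hskew hpn hw hwdef hwmono hx), add_zero]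
        simp only [hwdef]

end Construction

section Minimality

variable {n t : ℕ} {p q : Fin t → ℕ} {u : ℕ → ℕ}

/-- If `u (p i) < p i`, the position `p i` drops out of the condition at `(i₁, i)`, where `i₁`
is the last box reaching `p i - 1`; this leaves more large values in `[1, p i - 1]` than boxes
covering `p i - 1`. -/
lemma le_apply_corner (hp : StrictAnti p) (hppos : ∀ i, 0 < p i) (hskew : ∀ i, p i ≤ q i + 1)
    (hpn : ∀ i, p i ≤ n) (hu : Set.MapsTo u (Set.Icc 1 n) (Set.Icc 1 n))
    (hcond : RankCond p q u)
    (htight : ∀ a ∈ Icc 1 n, rankAbove u a a = coverCount p q a) (i : Fin t) :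
    p i ≤ u (p i) := by
  by_contra! hlt
  obtain ⟨hpi, -⟩ := hu (Set.mem_Icc.2 ⟨hppos i, hpn i⟩)
  set a := p i - 1
  set S : Finset (Fin t) := {m | a ≤ q m}
  have hiS : i ∈ S := mem_filter.2 ⟨mem_univ _, by have := hskew i; omega⟩
  set i₁ := S.max' ⟨i, hiS⟩
  have hii₁ : i ≤ i₁ := S.le_max' i hiS
  have hq₁ : a ≤ q i₁ := (mem_filter.1 (S.max'_mem _)).2
  have hcover : coverCount p q a ≤ i₁.val - i.val := by
    rw [coverCount, ← Fin.card_Ioc]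
    refine card_le_card fun m hm => ?_
    simp only [mem_filter, mem_univ, true_and] at hm
    exact mem_Ioc.2
      ⟨hp.lt_iff_gt.1 (by omega), S.le_max' m (mem_filter.2 ⟨mem_univ _, hm.2⟩)⟩
  have hrank : rankAbove u (p i) (q i₁) ≤ rankAbove u a a := card_le_card fun x hx => by
    simp only [mem_filter, mem_Icc] at hx ⊢
    have : x ≠ p i := by rintro rfl; omega
    omega
  have := hcond.le_rankAbove hii₁
  have := htight a (mem_Icc.2 ⟨by omega, by have := hpn i; omega⟩)
  have : i.val ≤ i₁.val := hii₁
  omega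

/-- The condition at `(i, i)` gives `x ≤ p i` with `u x > q i`. If `x < p i`, then `p i` is not a
fixed point (the values before a fixed point stay below it), so it is an excedance, whose value
exceeds all earlier ones. -/
lemma lt_apply_corner (hppos : ∀ i, 0 < p i) (hskew : ∀ i, p i ≤ q i + 1)
    (hpn : ∀ i, p i ≤ n) (hu : Set.BijOn u (Set.Icc 1 n) (Set.Icc 1 n))
    (hℓ : permLength n u = totalExcedance n u)
    (hcond : RankCond p q u) {i : Fin t} (hle : p i ≤ u (p i)) : q i < u (p i) := by
  obtain ⟨x, hx⟩ := card_pos.1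
    (by have := hcond.le_rankAbove (le_refl i); omega : 0 < rankAbove u (p i) (q i))
  rw [mem_filter, mem_Icc] at hx
  rcases hx.1.2.eq_or_lt with rfl | hxp
  · exact hx.2
  have hpi : p i ∈ Icc 1 n := mem_Icc.2 ⟨hppos i, hpn i⟩
  rcases hle.eq_or_lt with hfix | hexc
  · have := apply_le_of_fixed hu hℓ hpi hfix.symm (mem_Icc.2 ⟨hx.1.1, hxp.le⟩)
    have hne : u x ≠ u (p i) := fun h => hxp.ne (hu.injOn
      (Set.mem_Icc.2 ⟨hx.1.1, by have := hpn i; omega⟩) (Set.mem_Icc.2 (mem_Icc.1 hpi)) h)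
    have := hskew i
    omega
  · exact hx.2.trans (apply_lt_of_excedance hu hℓ hpi hexc (mem_Ico.2 ⟨hx.1.1, hxp⟩))

/-- Each corner contributes at least `q i + 1 - p i` to the total excedance, which equals their
sum; so the corners contribute exactly that and the other positions nothing. -/
lemma apply_corner_eq_and_strictMonoOn_of_permLength_eq (hp : StrictAnti p)
    (hppos : ∀ i, 0 < p i) (hskew : ∀ i, p i ≤ q i + 1) (hpn : ∀ i, p i ≤ n)
    (hqn : ∀ i, q i ≤ n)
    (hu : Set.BijOn u (Set.Icc 1 n) (Set.Icc 1 n)) (hcond : RankCond p q u)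
    (hℓ : permLength n u = ∑ i, (q i + 1 - p i)) :
    (∀ i, u (p i) = q i + 1) ∧ StrictMonoOn u ↑(Icc 1 n \ univ.image p) := by
  have := sum_le_totalExcedance hu.mapsTo hppos hqn hcond
  have := totalExcedance_le_permLength hu
  have he : totalExcedance n u = ∑ i, (q i + 1 - p i) := by omega
  have hℓ' : permLength n u = totalExcedance n u := by omega
  have hgt : ∀ i, q i < u (p i) := fun i => lt_apply_corner hppos hskew hpn hu hℓ' hcond
    (le_apply_corner hp hppos hskew hpn hu.mapsTo hcond
      (fun a ha => rankAbove_eq_coverCount hu.mapsTo hppos hqn hcond he ha) i)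
  have hle : ∀ i ∈ univ, q i + 1 - p i ≤ u (p i) - p i := fun i _ => by have := hgt i; omega
  have := totalExcedance_eq_sum_corners_add (u := u) hp.injective (image_subset_Icc hppos hpn)
  have := sum_le_sum hle
  have hcorners : ∑ i, (q i + 1 - p i) = ∑ i, (u (p i) - p i) := by omega
  have hrest : ∑ x ∈ Icc 1 n \ univ.image p, (u x - x) = 0 := by omega
  refine ⟨fun i => ?_, fun x hx y hy hxy => ?_⟩
  · have := (sum_eq_sum_iff_of_le hle).1 hcorners i (mem_univ i)
    have := hgt i
    have := hskew i
    omega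
  · have := sum_eq_zero_iff.1 hrest x hx
    exact apply_lt_of_nonexcedance hu hℓ' (mem_sdiff.1 hx).1 (by omega) (mem_sdiff.1 hy).1 hxy

end Minimality

end Perm321

theorem length_321_avoiding_general (n t : ℕ) (p q : Fin t → ℕ)
    (hp : StrictAnti p) (hq : StrictAnti q)
    (hppos : ∀ i, 0 < p i)
    (hskew : ∀ i, p i ≤ q i + 1)
    (hpn : ∀ i, p i ≤ n)
    (w : ℕ → ℕ) (hwbij : Set.BijOn w (Set.Icc 1 n) (Set.Icc 1 n))
    (hwdef : ∀ i, w (p i) = q i + 1)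
    (hwfill : ∀ a ∈ Set.Icc 1 n, ∀ b ∈ Set.Icc 1 n,
      a ∉ Set.range p → b ∉ Set.range p → a < b → w a < w b) :
    (∀ i j : Fin t,
      (1 : ℤ) + (i.val : ℤ) - (j.val : ℤ) ≤
        (((Finset.Icc 1 (p j)).filter (fun x => q i < w x)).card : ℤ)) ∧
    permLength n w = ∑ i, (q i + 1 - p i) ∧
    (∀ w' : ℕ → ℕ, Set.BijOn w' (Set.Icc 1 n) (Set.Icc 1 n) →
      (∀ i j : Fin t,
        (1 : ℤ) + (i.val : ℤ) - (j.val : ℤ) ≤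
          (((Finset.Icc 1 (p j)).filter (fun x => q i < w' x)).card : ℤ)) →
      permLength n w ≤ permLength n w' ∧
        (permLength n w' = permLength n w → ∀ x ∈ Set.Icc 1 n, w' x = w x)) := by
  have hP := Perm321.image_subset_Icc hppos hpn
  have hqn : ∀ i, q i ≤ n := fun i => by
    have := (hwbij.mapsTo (Set.mem_Icc.2 ⟨hppos i, hpn i⟩)).2
    rw [hwdef] at this
    omega
  have hwmono : StrictMonoOn w ↑(Icc 1 n \ univ.image p) := fun a ha b hb hab => by
    simp only [coe_sdiff, coe_Icc, coe_image, coe_univ, Set.image_univ] at ha hb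
    exact hwfill a ha.1 b hb.1 ha.2 hb.2 hab
  have hwcond : Perm321.RankCond p q w := Perm321.rankCond_of_apply_eq hp hq hppos hwdef
  have hlen : permLength n w = ∑ i, (q i + 1 - p i) :=
    (Perm321.permLength_le_sum hp hq hppos hskew hpn hwbij hwdef hwmono).antisymm
      (Perm321.sum_le_permLength hppos hqn hwcond hwbij)
  refine ⟨hwcond, hlen, fun w' hw' hw'cond => ⟨hlen.trans_le
    (Perm321.sum_le_permLength hppos hqn hw'cond hw'), fun heq x hx => ?_⟩⟩
  obtain ⟨hcorner, hmono⟩ := Perm321.apply_corner_eq_and_strictMonoOn_of_permLength_eq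
    hp hppos hskew hpn hqn hw' hw'cond (heq.trans hlen)
  refine Perm321.eqOn_of_strictMonoOn_sdiff hw' hwbij hP hmono hwmono (fun y hy => ?_)
    (mem_Icc.2 hx)
  obtain ⟨i, -, rfl⟩ := mem_image.1 hy
  rw [hcorner, hwdef]

theorem length_321_avoiding (n t : ℕ) (p q : Fin t → ℕ)
    (hp : StrictAnti p) (hq : StrictAnti q)
    (hppos : ∀ i, 0 < p i) (hqpos : ∀ i, 0 < q i)
    (hskew : ∀ i, p i ≤ q i + 1)
    (hpn : ∀ i, p i ≤ n) (hqn : ∀ i, q i + 1 ≤ n)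
    (w : ℕ → ℕ) (hwbij : Set.BijOn w (Set.Icc 1 n) (Set.Icc 1 n))
    (hwdef : ∀ i, w (p i) = q i + 1)
    (hwfill : ∀ a ∈ Set.Icc 1 n, ∀ b ∈ Set.Icc 1 n,
      a ∉ Set.range p → b ∉ Set.range p → a < b → w a < w b) :
    (∀ i j : Fin t,
      (1 : ℤ) + (i.val : ℤ) - (j.val : ℤ) ≤
        (((Finset.Icc 1 (p j)).filter (fun x => q i < w x)).card : ℤ)) ∧
    permLength n w = ∑ i, (q i + 1 - p i) ∧
    (∀ w' : ℕ → ℕ, Set.BijOn w' (Set.Icc 1 n) (Set.Icc 1 n) →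
      (∀ i j : Fin t,
        (1 : ℤ) + (i.val : ℤ) - (j.val : ℤ) ≤
          (((Finset.Icc 1 (p j)).filter (fun x => q i < w' x)).card : ℤ)) →
      permLength n w ≤ permLength n w' ∧
        (permLength n w' = permLength n w → ∀ x ∈ Set.Icc 1 n, w' x = w x)) :=
  length_321_avoiding_general n t p q hp hq hppos hskew hpn w hwbij hwdef hwfill
end
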